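/- arXiv:1203.2388 — 5 statements merged into one kernel-verified Lean document; each statement's English description precedes it below -/
import Mathlib

section
/- On the algebraic quantum torus A_θ, the ℂ[U,U⁻¹]-valued map δ(U^nV^m) = q^{nm}U^n is a right character: δ(k·s(r)) = δ(k)r, δ(k₁k₂) = δ(s(δ(k₁))k₂), and δ(1) = 1, where s : ℂ[U,U⁻¹] → A_θ is the natural embedding. -/
open TensorProduct

lemma qt_helper {G : Type*} [Group G] {a b c : G} (hc : ∀ g, c * g = g * c)
    (h : a * b = c * (b * a)) (n : ℤ) : a ^ n * b = c ^ n * (b * a ^ n) := by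
  have hcn : ∀ g : G, c ^ n * g = g * c ^ n := fun g =>
    ((show Commute c g from hc g).zpow_left n).eq
  have h1 : b⁻¹ * a * b = c * a := by
    calc b⁻¹ * a * b = b⁻¹ * (a * b) := by rw [mul_assoc]
      _ = b⁻¹ * (c * (b * a)) := by rw [h]
      _ = c * (b⁻¹ * (b * a)) := by rw [← mul_assoc, ← hc, mul_assoc]
      _ = c * a := by rw [inv_mul_cancel_left]
  have h2 : b⁻¹ * a ^ n * b = c ^ n * a ^ n := by
    have hconj : ∀ x : G, (MulAut.conj b⁻¹) x = b⁻¹ * x * b := by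
      intro x; rw [MulAut.conj_apply, inv_inv]
    have hm := map_zpow (MulAut.conj b⁻¹) a n
    rw [hconj, hconj, h1] at hm
    rw [hm]
    exact Commute.mul_zpow (hc a) n
  calc a ^ n * b = b * (b⁻¹ * a ^ n * b) := by group
    _ = b * (c ^ n * a ^ n) := by rw [h2]
    _ = c ^ n * (b * a ^ n) := by rw [← mul_assoc, ← hcn, mul_assoc]

lemma qt_key {G : Type*} [Group G] {U V c : G} (hc : ∀ g, c * g = g * c)
    (h : U * V = c * (V * U)) (n m : ℤ) :
    V ^ m * U ^ n = c ^ (-(n * m)) * (U ^ n * V ^ m) := by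
  have h1 := qt_helper hc h n
  have h2 : V * U ^ n = c ^ (-n) * (U ^ n * V) := by
    rw [h1, ← mul_assoc, ← zpow_add, neg_add_cancel, zpow_zero, one_mul]
  have hc' : ∀ g : G, c ^ (-n) * g = g * c ^ (-n) := fun g =>
    ((show Commute c g from hc g).zpow_left (-n)).eq
  have h3 := qt_helper hc' h2 m
  rw [h3, ← zpow_mul, neg_mul]

/-- On the algebraic quantum torus `A_θ`, the `ℂ[U,U⁻¹]`-valued map
`δ(U^nV^m) = q^{nm}U^n` is a right character: `δ(k·s(r)) = δ(k)r`,
`δ(k₁k₂) = δ(s(δ(k₁))k₂)`, and `δ(1) = 1`, where `s : ℂ[U,U⁻¹] → A_θ` is the natural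
embedding (`emb`, with `emb u = U`). -/
theorem quantum_torus_right_character
    (A R : Type*) [Ring A] [Algebra ℂ A] [CommRing R] [Algebra ℂ R]
    (q : ℂ) (θ : ℝ) (hq : q = Complex.exp (2 * Real.pi * θ * Complex.I))
    (U V : Aˣ) (hUV : (U : A) * V = q • ((V : A) * U))
    (emb : R →ₐ[ℂ] A) (u : Rˣ) (hu : emb u = U)
    (hspanA : Submodule.span ℂ {x : A | ∃ n m : ℤ, x = ↑(U ^ n) * ↑(V ^ m)} = ⊤)
    (hspanR : Submodule.span ℂ {r : R | ∃ n : ℤ, r = ↑(u ^ n)} = ⊤)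
    (δ : A →ₗ[ℂ] R)
    (hδ : ∀ n m : ℤ, δ (↑(U ^ n) * ↑(V ^ m)) = q ^ (n * m) • (↑(u ^ n) : R)) :
    (∀ (x : A) (r : R), δ (x * emb r) = δ x * r) ∧
    (∀ x₁ x₂ : A, δ (x₁ * x₂) = δ (emb (δ x₁) * x₂)) ∧
    δ 1 = 1 := by
  have hq0 : q ≠ 0 := by rw [hq]; exact Complex.exp_ne_zero _
  set qu : ℂˣ := Units.mk0 q hq0 with hqu
  set f : ℂ →* A := (algebraMap ℂ A).toMonoidHom with hf
  set c : Aˣ := Units.map f qu with hc_def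
  have hcval : ∀ k : ℤ, ((c ^ k : Aˣ) : A) = algebraMap ℂ A (q ^ k) := by
    intro k
    rw [hc_def, ← map_zpow (Units.map f) qu k, Units.coe_map]
    simp [hf, Units.val_zpow_eq_zpow_val, hqu]
  have hcv : (c : A) = algebraMap ℂ A q := by
    rw [hc_def, Units.coe_map]; simp [hf, hqu]
  have hc : ∀ a : Aˣ, c * a = a * c := by
    intro a
    apply Units.ext
    rw [Units.val_mul, Units.val_mul, hcv]
    exact Algebra.commutes q (a : A)
  have hUVc : U * V = c * (V * U) := by
    apply Units.ext
    rw [Units.val_mul, Units.val_mul, Units.val_mul, hcv, hUV, Algebra.smul_def]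
  have keyA : ∀ n m : ℤ, ((V ^ m : Aˣ) : A) * ((U ^ n : Aˣ) : A)
      = q ^ (-(n * m)) • (((U ^ n : Aˣ) : A) * ((V ^ m : Aˣ) : A)) := by
    intro n m
    rw [← Units.val_mul, qt_key hc hUVc n m, Units.val_mul, hcval, ← Algebra.smul_def, Units.val_mul]
  set g : R →* A := emb.toRingHom.toMonoidHom with hg
  have hUu : Units.map g u = U := Units.ext (by simpa [hg, Units.coe_map] using hu)
  have hembu : ∀ k : ℤ, emb ((u ^ k : Rˣ) : R) = ((U ^ k : Aˣ) : A) := by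
    intro k
    calc emb ((u ^ k : Rˣ) : R) = g ((u ^ k : Rˣ) : R) := rfl
      _ = ((Units.map g (u ^ k) : Aˣ) : A) := (Units.coe_map g (u ^ k)).symm
      _ = (((Units.map g u) ^ k : Aˣ) : A) := by rw [map_zpow]
      _ = ((U ^ k : Aˣ) : A) := by rw [hUu]
  have hprod : ∀ n m k l : ℤ, (((U ^ n : Aˣ) : A) * ((V ^ m : Aˣ) : A))
      * (((U ^ k : Aˣ) : A) * ((V ^ l : Aˣ) : A))
      = q ^ (-(k * m)) • (((U ^ (n + k) : Aˣ) : A) * ((V ^ (m + l) : Aˣ) : A)) := by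
    intro n m k l
    calc ((U ^ n : Aˣ) : A) * ((V ^ m : Aˣ) : A) * (((U ^ k : Aˣ) : A) * ((V ^ l : Aˣ) : A))
        = ((U ^ n : Aˣ) : A) * (((V ^ m : Aˣ) : A) * ((U ^ k : Aˣ) : A)) * ((V ^ l : Aˣ) : A) := by
          noncomm_ring
      _ = ((U ^ n : Aˣ) : A) * (q ^ (-(k * m)) • (((U ^ k : Aˣ) : A) * ((V ^ m : Aˣ) : A)))
            * ((V ^ l : Aˣ) : A) := by rw [keyA k m]
      _ = q ^ (-(k * m)) • (((U ^ n : Aˣ) : A) * ((U ^ k : Aˣ) : A)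
            * (((V ^ m : Aˣ) : A) * ((V ^ l : Aˣ) : A))) := by
          rw [mul_smul_comm, smul_mul_assoc]
          congr 1
          noncomm_ring
      _ = q ^ (-(k * m)) • (((U ^ (n + k) : Aˣ) : A) * ((V ^ (m + l) : Aˣ) : A)) := by
          rw [zpow_add, zpow_add, Units.val_mul, Units.val_mul]
  -- claim 1
  have claim1 : ∀ (x : A) (r : R), δ (x * emb r) = δ x * r := by
    intro x
    have hx : x ∈ Submodule.span ℂ {x : A | ∃ n m : ℤ, x = ↑(U ^ n) * ↑(V ^ m)} := by
      rw [hspanA]; trivial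
    induction hx using Submodule.span_induction with
    | mem x hxs =>
      obtain ⟨n, m, rfl⟩ := hxs
      intro r
      have hr : r ∈ Submodule.span ℂ {r : R | ∃ n : ℤ, r = ↑(u ^ n)} := by
        rw [hspanR]; trivial
      induction hr using Submodule.span_induction with
      | mem r hrs =>
        obtain ⟨k, rfl⟩ := hrs
        rw [hembu]
        have h1 : (((U ^ n : Aˣ) : A) * ((V ^ m : Aˣ) : A)) * ((U ^ k : Aˣ) : A)
            = q ^ (-(k * m)) • (((U ^ (n + k) : Aˣ) : A) * ((V ^ m : Aˣ) : A)) := by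
          have := hprod n m k 0
          simpa using this
        rw [h1, map_smul, hδ, hδ, smul_mul_assoc, ← Units.val_mul, ← zpow_add,
          smul_smul, ← zpow_add₀ hq0, show -(k * m) + (n + k) * m = n * m by ring]
      | zero => simp
      | add r₁ r₂ _ _ ih₁ ih₂ => simp [map_add, mul_add, ih₁, ih₂]
      | smul a r _ ih => simp [map_smul, mul_smul_comm, ih]
    | zero => intro r; simp
    | add x y _ _ ihx ihy => intro r; simp [add_mul, map_add, ihx r, ihy r]
    | smul a x _ ih => intro r; simp [smul_mul_assoc, map_smul, ih r]
  refine ⟨claim1, ?_, ?_⟩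
  · -- claim 2
    intro x₁
    have hx : x₁ ∈ Submodule.span ℂ {x : A | ∃ n m : ℤ, x = ↑(U ^ n) * ↑(V ^ m)} := by
      rw [hspanA]; trivial
    induction hx using Submodule.span_induction with
    | mem x hxs =>
      obtain ⟨n, m, rfl⟩ := hxs
      intro x₂
      have hx₂ : x₂ ∈ Submodule.span ℂ {x : A | ∃ n m : ℤ, x = ↑(U ^ n) * ↑(V ^ m)} := by
        rw [hspanA]; trivial
      induction hx₂ using Submodule.span_induction with
      | mem y hys =>
        obtain ⟨k, l, rfl⟩ := hys
        rw [hprod, map_smul, hδ, hδ n m, map_smul, hembu, smul_mul_assoc, map_smul]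
        have h2 : ((U ^ n : Aˣ) : A) * (((U ^ k : Aˣ) : A) * ((V ^ l : Aˣ) : A))
            = ((U ^ (n + k) : Aˣ) : A) * ((V ^ l : Aˣ) : A) := by
          rw [zpow_add, Units.val_mul, mul_assoc]
        rw [h2, hδ, smul_smul, smul_smul, ← zpow_add₀ hq0, ← zpow_add₀ hq0,
          show -(k * m) + (n + k) * (m + l) = n * m + (n + k) * l by ring]
      | zero => simp
      | add y₁ y₂ _ _ ih₁ ih₂ => simp only [mul_add, map_add, ih₁, ih₂]
      | smul a y _ ih => simp only [mul_smul_comm, map_smul, ih]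
    | zero => intro x₂; simp
    | add x y _ _ ihx ihy =>
      intro x₂
      simp only [add_mul, map_add, ihx x₂, ihy x₂]
    | smul a x _ ih =>
      intro x₂
      simp only [smul_mul_assoc, map_smul, ih x₂]
  · simpa using hδ 0 0
end

section
/- Let H be a Hopf algebra over ℂ and A a left H-module algebra. The Connes–Moscovici algebra H_CM = A ⊗ H ⊗ A^op with multiplication (a⊗h⊗b)·(a'⊗h'⊗b') = a(h₍₁₎▷a') ⊗ h₍₂₎h' ⊗ (h₍₃₎▷b')b is an associative unital algebra with unit 1⊗1⊗1. -/
open TensorProduct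

/-!
Write `Δ² = (id ⊗ Δ) ∘ Δ`, so that `(a ⊗ h ⊗ b)(a' ⊗ h' ⊗ b')` is a fixed linear function of
`Δ² h`. After expanding `Δ² h'` as a sum, both `((a ⊗ h ⊗ b) x) y` and `(a ⊗ h ⊗ b)(x y)` become
the same sum of five-legged linear expressions, evaluated at two four-fold comultiples of `h`:
`Δ²` applied to the middle leg of `Δ² h` (this uses that `Δ²` is multiplicative and that `ρ` is
an action), resp. `Δ` applied to both outer legs of `Δ² h` (this uses that `A` is a module
algebra). Coassociativity identifies the two. The unit laws reduce to
`Δ² 1 = 1 ⊗ 1 ⊗ 1`, `1 ▷ a = a` and `(ε ⊗ id ⊗ ε) ∘ Δ² = id` together with `h ▷ 1 = ε(h) 1`.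
-/

namespace ConnesMoscovici

open Coalgebra LinearMap

section PureTensors

variable {R M N P : Type*} [CommSemiring R] [AddCommMonoid M] [AddCommMonoid N] [AddCommMonoid P]
  [Module R M] [Module R N] [Module R P]

-- Indexed by `Fin n`, so that the index type lies in `Type` as the Sweedler-form hypotheses need.
theorem exists_fin_sum_tmul (x : M ⊗[R] N) :
    ∃ (n : ℕ) (f : Fin n → M) (g : Fin n → N), x = ∑ i, f i ⊗ₜ g i := by
  induction x with
  | zero => exact ⟨0, Fin.elim0, Fin.elim0, by simp⟩
  | tmul m p => exact ⟨1, fun _ => m, fun _ => p, by simp⟩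
  | add x y hx hy =>
    obtain ⟨n, f, g, rfl⟩ := hx
    obtain ⟨n', f', g', rfl⟩ := hy
    exact ⟨n + n', Fin.append f f', Fin.append g g', by simp [Fin.sum_univ_add]⟩

theorem exists_fin_sum_tmul_tmul (x : M ⊗[R] (N ⊗[R] P)) :
    ∃ (n : ℕ) (f : Fin n → M) (g : Fin n → N) (k : Fin n → P),
      x = ∑ i, f i ⊗ₜ (g i ⊗ₜ k i) := by
  induction x with
  | zero => exact ⟨0, Fin.elim0, Fin.elim0, Fin.elim0, by simp⟩
  | tmul m y =>
    obtain ⟨n, g, k, rfl⟩ := exists_fin_sum_tmul y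
    exact ⟨n, fun _ => m, g, k, by simp [tmul_sum]⟩
  | add x y hx hy =>
    obtain ⟨n, f, g, k, rfl⟩ := hx
    obtain ⟨n', f', g', k', rfl⟩ := hy
    exact ⟨n + n', Fin.append f f', Fin.append g g', Fin.append k k',
      by simp [Fin.sum_univ_add]⟩

theorem assoc_of_forall_tmul
    (μ : M ⊗[R] (N ⊗[R] P) →ₗ[R] M ⊗[R] (N ⊗[R] P) →ₗ[R] M ⊗[R] (N ⊗[R] P))
    (hμ : ∀ m n p m' n' p' m'' n'' p'', μ (μ (m ⊗ₜ (n ⊗ₜ p)) (m' ⊗ₜ (n' ⊗ₜ p')))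
      (m'' ⊗ₜ (n'' ⊗ₜ p'')) = μ (m ⊗ₜ (n ⊗ₜ p)) (μ (m' ⊗ₜ (n' ⊗ₜ p')) (m'' ⊗ₜ (n'' ⊗ₜ p''))))
    (x y z : M ⊗[R] (N ⊗[R] P)) : μ (μ x y) z = μ x (μ y z) := by
  have h₁ (x) (m' n' p' m'' n'' p'') :=
    congr($(ext_threefold' (g := μ.flip (m'' ⊗ₜ (n'' ⊗ₜ p'')) ∘ₗ μ.flip (m' ⊗ₜ (n' ⊗ₜ p')))
      (h := μ.flip (μ (m' ⊗ₜ (n' ⊗ₜ p')) (m'' ⊗ₜ (n'' ⊗ₜ p'')))) fun m n p => hμ ..) x)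
  have h₂ (x y) (m'' n'' p'') :=
    congr($(ext_threefold' (g := μ.flip (m'' ⊗ₜ (n'' ⊗ₜ p'')) ∘ₗ μ x)
      (h := μ x ∘ₗ μ.flip (m'' ⊗ₜ (n'' ⊗ₜ p''))) fun m' n' p' => h₁ x ..) y)
  exact congr($(ext_threefold' (g := μ (μ x y)) (h := μ x ∘ₗ μ y) fun _ _ _ => h₂ x y ..) z)

end PureTensors

section Coalgebra

variable {R C : Type*} [CommSemiring R] [AddCommMonoid C] [Module R C] [Coalgebra R C]

variable (R) in
def comul₂ : C →ₗ[R] C ⊗[R] (C ⊗[R] C) := (comul (R := R)).lTensor C ∘ₗ comul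

variable (R) in
def regroup {M₁ M₂ M₃ M₄ M₅ : Type*} [AddCommMonoid M₁] [AddCommMonoid M₂] [AddCommMonoid M₃]
    [AddCommMonoid M₄] [AddCommMonoid M₅] [Module R M₁] [Module R M₂] [Module R M₃]
    [Module R M₄] [Module R M₅] :
    M₁ ⊗[R] ((M₂ ⊗[R] (M₃ ⊗[R] M₄)) ⊗[R] M₅) ≃ₗ[R] (M₁ ⊗[R] M₂) ⊗[R] (M₃ ⊗[R] (M₄ ⊗[R] M₅)) :=
  (TensorProduct.assoc R M₂ (M₃ ⊗[R] M₄) M₅ ≪≫ₗ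
      (TensorProduct.assoc R M₃ M₄ M₅).lTensor M₂).lTensor M₁ ≪≫ₗ
    (TensorProduct.assoc R M₁ M₂ _).symm

theorem regroup_lTensor_rTensor_comul₂ (c : C) :
    regroup R (((comul₂ R).rTensor C).lTensor C (comul₂ R c)) =
      map comul ((comul (R := R)).lTensor C) (comul₂ R c) := by
  have : (regroup R).toLinearMap ∘ₗ ((comul₂ R).rTensor C).lTensor C ∘ₗ comul₂ R =
      map comul ((comul (R := R)).lTensor C) ∘ₗ comul₂ (C := C) R := by
    simp only [regroup, comul₂, coassoc_simps]
  exact congr($this c)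

theorem map_counit_comul₂ (c : C) :
    map counit (map id counit) (comul₂ R c) = (1 : R) ⊗ₜ (c ⊗ₜ (1 : R)) := by
  rw [comul₂, comp_apply, ← comp_apply (map _ _), lTensor, ← map_comp, comp_id,
    ← lTensor_comp_rTensor, comp_apply, ← lTensor_def, lTensor_counit_comp_comul,
    rTensor_counit_comul]
  rfl

end Coalgebra

section Bialgebra

variable {R H : Type*} [CommSemiring R] [Semiring H] [Bialgebra R H]

theorem comul₂_mul (g h : H) : comul₂ R (g * h) = comul₂ R g * comul₂ R h := by
  simp only [comul₂, comp_apply, Bialgebra.comul_mul]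
  exact map_mul (Algebra.TensorProduct.lTensor H (Bialgebra.comulAlgHom R H)) _ _

theorem comul₂_one : comul₂ R (1 : H) = 1 ⊗ₜ (1 ⊗ₜ 1) := by
  simp [comul₂, Algebra.TensorProduct.one_def]

end Bialgebra

section Product

variable {R H A : Type*} [CommSemiring R] [Semiring H] [Bialgebra R H] [Semiring A] [Algebra R A]
  (ρ : H →ₗ[R] A →ₗ[R] A)

-- Evaluated at `Δ² h = h₍₁₎ ⊗ h₍₂₎ ⊗ h₍₃₎`, this is the product `(a ⊗ h ⊗ b)(a' ⊗ h' ⊗ b')`.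
def cmTerm (a a' b b' : A) (h' : H) : H ⊗[R] (H ⊗[R] H) →ₗ[R] A ⊗[R] (H ⊗[R] A) :=
  map (mulLeft R a ∘ₗ ρ.flip a') (map (mulRight R h') (mulRight R b ∘ₗ ρ.flip b'))

@[simp]
theorem cmTerm_tmul (a a' b b' : A) (h' f g k : H) :
    cmTerm ρ a a' b b' h' (f ⊗ₜ (g ⊗ₜ k)) = (a * ρ f a') ⊗ₜ ((g * h') ⊗ₜ (ρ k b' * b)) := rfl

def cmTerm₅ (a a' b b' c d : A) (k : H) :
    (H ⊗[R] H) ⊗[R] (H ⊗[R] (H ⊗[R] H)) →ₗ[R] A ⊗[R] (H ⊗[R] A) :=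
  map (mulLeft R a ∘ₗ mul' R A ∘ₗ map (ρ.flip a') (ρ.flip c))
    (map (mulRight R k) (mulRight R b ∘ₗ mul' R A ∘ₗ map (ρ.flip d) (ρ.flip b')))

@[simp]
theorem cmTerm₅_tmul (a a' b b' c d : A) (k x₁ x₂ x₃ x₄ x₅ : H) :
    cmTerm₅ ρ a a' b b' c d k ((x₁ ⊗ₜ x₂) ⊗ₜ (x₃ ⊗ₜ (x₄ ⊗ₜ x₅))) =
      (a * (ρ x₁ a' * ρ x₂ c)) ⊗ₜ ((x₃ * k) ⊗ₜ (ρ x₄ d * ρ x₅ b' * b)) := rfl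

theorem cmTerm_mul_mul
    (hρa : ∀ a b : A, ρ.flip (a * b) = mul' R A ∘ₗ map (ρ.flip a) (ρ.flip b) ∘ₗ comul)
    (a a' b b' c d : A) (k : H) :
    cmTerm ρ a (a' * c) b (d * b') k =
      cmTerm₅ ρ a a' b b' c d k ∘ₗ map comul ((comul (R := R)).lTensor H) := by
  simp only [cmTerm, cmTerm₅, hρa, coassoc_simps]

def IsCMProduct (mul : A ⊗[R] (H ⊗[R] A) →ₗ[R] A ⊗[R] (H ⊗[R] A) →ₗ[R] A ⊗[R] (H ⊗[R] A)) :
    Prop :=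
  ∀ (a a' b b' : A) (h h' : H),
    mul (a ⊗ₜ (h ⊗ₜ b)) (a' ⊗ₜ (h' ⊗ₜ b')) = cmTerm ρ a a' b b' h' (comul₂ R h)

variable {ρ} {mul : A ⊗[R] (H ⊗[R] A) →ₗ[R] A ⊗[R] (H ⊗[R] A) →ₗ[R] A ⊗[R] (H ⊗[R] A)}

theorem isCMProduct_of_sum_tmul
    (hmul : ∀ (a a' b b' : A) (h h' : H) (ι : Type) (t : Finset ι) (f g k : ι → H),
      comul₂ R h = ∑ i ∈ t, f i ⊗ₜ (g i ⊗ₜ k i) →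
      mul (a ⊗ₜ (h ⊗ₜ b)) (a' ⊗ₜ (h' ⊗ₜ b')) =
        ∑ i ∈ t, (a * ρ (f i) a') ⊗ₜ ((g i * h') ⊗ₜ (ρ (k i) b' * b))) :
    IsCMProduct ρ mul := by
  intro a a' b b' h h'
  obtain ⟨n, f, g, k, hfgk⟩ := exists_fin_sum_tmul_tmul (comul₂ R h)
  simp [hmul a a' b b' h h' _ _ f g k hfgk, hfgk]

theorem flip_mul_of_sum_tmul
    (hρa : ∀ (h : H) (a b : A) (ι : Type) (t : Finset ι) (f g : ι → H),
      comul (R := R) h = ∑ i ∈ t, f i ⊗ₜ g i → ρ h (a * b) = ∑ i ∈ t, ρ (f i) a * ρ (g i) b)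
    (a b : A) : ρ.flip (a * b) = mul' R A ∘ₗ map (ρ.flip a) (ρ.flip b) ∘ₗ comul := by
  ext h
  obtain ⟨n, f, g, hfg⟩ := exists_fin_sum_tmul (comul (R := R) h)
  simp [hρa h a b _ _ f g hfg, hfg]

theorem IsCMProduct.mul_mul_tmul (hmul : IsCMProduct ρ mul)
    (hρm : ∀ g h : H, ρ (g * h) = ρ g ∘ₗ ρ h)
    (a a' a'' b b' b'' : A) (h h' h'' : H) {n : ℕ} (p q r : Fin n → H)
    (hpqr : comul₂ R h' = ∑ l, p l ⊗ₜ (q l ⊗ₜ r l)) :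
    mul (mul (a ⊗ₜ (h ⊗ₜ b)) (a' ⊗ₜ (h' ⊗ₜ b'))) (a'' ⊗ₜ (h'' ⊗ₜ b'')) =
      ∑ l, cmTerm₅ ρ a a' b b' (ρ (p l) a'') (ρ (r l) b'') (q l * h'')
        (regroup R (((comul₂ R).rTensor H).lTensor H (comul₂ R h))) := by
  unfold IsCMProduct at hmul
  suffices mul.flip (a'' ⊗ₜ (h'' ⊗ₜ b'')) ∘ₗ cmTerm ρ a a' b b' h' =
      (∑ l, cmTerm₅ ρ a a' b b' (ρ (p l) a'') (ρ (r l) b'') (q l * h'')) ∘ₗ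
        (regroup R).toLinearMap ∘ₗ ((comul₂ R).rTensor H).lTensor H by
    simpa [hmul] using congr($this (comul₂ R h))
  refine ext_threefold' fun f g k => ?_
  obtain ⟨m, u, v, w, huvw⟩ := exists_fin_sum_tmul_tmul (comul₂ R g)
  simp [hmul, comul₂_mul, huvw, hpqr, Finset.sum_mul, Finset.mul_sum, tmul_sum, sum_tmul, hρm,
    mul_assoc, regroup]

theorem IsCMProduct.mul_assoc_tmul (hmul : IsCMProduct ρ mul)
    (hρm : ∀ g h : H, ρ (g * h) = ρ g ∘ₗ ρ h)
    (hρa : ∀ a b : A, ρ.flip (a * b) = mul' R A ∘ₗ map (ρ.flip a) (ρ.flip b) ∘ₗ comul)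
    (a a' a'' b b' b'' : A) (h h' h'' : H) :
    mul (mul (a ⊗ₜ (h ⊗ₜ b)) (a' ⊗ₜ (h' ⊗ₜ b'))) (a'' ⊗ₜ (h'' ⊗ₜ b'')) =
      mul (a ⊗ₜ (h ⊗ₜ b)) (mul (a' ⊗ₜ (h' ⊗ₜ b')) (a'' ⊗ₜ (h'' ⊗ₜ b''))) := by
  obtain ⟨n, p, q, r, hpqr⟩ := exists_fin_sum_tmul_tmul (comul₂ R h')
  rw [hmul.mul_mul_tmul hρm a a' a'' b b' b'' h h' h'' p q r hpqr,
    regroup_lTensor_rTensor_comul₂, hmul a', hpqr, map_sum, map_sum]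
  refine Finset.sum_congr rfl fun l _ => ?_
  rw [cmTerm_tmul, hmul, cmTerm_mul_mul ρ hρa, comp_apply]

theorem IsCMProduct.mul_assoc (hmul : IsCMProduct ρ mul)
    (hρm : ∀ g h : H, ρ (g * h) = ρ g ∘ₗ ρ h)
    (hρa : ∀ a b : A, ρ.flip (a * b) = mul' R A ∘ₗ map (ρ.flip a) (ρ.flip b) ∘ₗ comul)
    (x y z : A ⊗[R] (H ⊗[R] A)) : mul (mul x y) z = mul x (mul y z) :=
  assoc_of_forall_tmul mul (fun a h b a' h' b' a'' h'' b'' =>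
    hmul.mul_assoc_tmul hρm hρa a a' a'' b b' b'' h h' h'') x y z

theorem IsCMProduct.one_mul (hmul : IsCMProduct ρ mul) (hρ1 : ρ 1 = LinearMap.id)
    (x : A ⊗[R] (H ⊗[R] A)) : mul (1 ⊗ₜ (1 ⊗ₜ 1)) x = x := by
  unfold IsCMProduct at hmul
  exact congr($(ext_threefold' (g := mul (1 ⊗ₜ (1 ⊗ₜ 1))) (h := LinearMap.id) fun a h b => by
    simp [hmul, comul₂_one, hρ1]) x)

theorem IsCMProduct.mul_one (hmul : IsCMProduct ρ mul)
    (hρu : ∀ h : H, ρ h 1 = counit (R := R) h • 1)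
    (x : A ⊗[R] (H ⊗[R] A)) : mul x (1 ⊗ₜ (1 ⊗ₜ 1)) = x := by
  unfold IsCMProduct at hmul
  refine congr($(ext_threefold' (g := mul.flip (1 ⊗ₜ (1 ⊗ₜ 1))) (h := LinearMap.id)
    fun a h b => ?_) x)
  have hε : cmTerm ρ a 1 b 1 1 =
      map (toSpanSingleton R A a) (map id (toSpanSingleton R A b)) ∘ₗ map counit (map id counit) :=
    ext_threefold' fun f g k => by simp [hρu, smul_tmul', tmul_smul]
  simp [hmul, hε, map_counit_comul₂]

end Product

end ConnesMoscovici

/-- For a Hopf algebra `H` over `ℂ` and a left `H`-module algebra `A`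
(action `ρ`), the Connes–Moscovici algebra `H_CM = A ⊗ H ⊗ Aᵒᵖ` with multiplication
`(a⊗h⊗b)·(a'⊗h'⊗b') = a(h₍₁₎▷a') ⊗ h₍₂₎h' ⊗ (h₍₃₎▷b')b` is an associative unital algebra with
unit `1⊗1⊗1`.  (Sweedler components are handled by quantifying over finite representations of
the iterated comultiplication.) -/
theorem connesMoscovici_algebra_assoc_unital
    (H A : Type*) [Ring H] [HopfAlgebra ℂ H] [Ring A] [Algebra ℂ A]
    (ρ : H →ₗ[ℂ] A →ₗ[ℂ] A)
    (hρ1 : ρ 1 = LinearMap.id)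
    (hρm : ∀ g h : H, ρ (g * h) = ρ g ∘ₗ ρ h)
    (hρa : ∀ (h : H) (a b : A) (ι : Type) (t : Finset ι) (f g : ι → H),
      Coalgebra.comul (R := ℂ) h = ∑ i ∈ t, f i ⊗ₜ[ℂ] g i →
      ρ h (a * b) = ∑ i ∈ t, ρ (f i) a * ρ (g i) b)
    (hρu : ∀ h : H, ρ h 1 = Coalgebra.counit (R := ℂ) h • (1 : A))
    (mul : (A ⊗[ℂ] (H ⊗[ℂ] A)) →ₗ[ℂ] (A ⊗[ℂ] (H ⊗[ℂ] A)) →ₗ[ℂ] (A ⊗[ℂ] (H ⊗[ℂ] A)))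
    (hmul : ∀ (a a' b b' : A) (h h' : H) (ι : Type) (t : Finset ι) (f g k : ι → H),
      ((LinearMap.lTensor H (Coalgebra.comul (R := ℂ))) ∘ₗ Coalgebra.comul (R := ℂ)) h =
          ∑ i ∈ t, f i ⊗ₜ[ℂ] (g i ⊗ₜ[ℂ] k i) →
      mul (a ⊗ₜ[ℂ] (h ⊗ₜ[ℂ] b)) (a' ⊗ₜ[ℂ] (h' ⊗ₜ[ℂ] b')) =
        ∑ i ∈ t, (a * ρ (f i) a') ⊗ₜ[ℂ] ((g i * h') ⊗ₜ[ℂ] (ρ (k i) b' * b))) :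
    (∀ x y z : A ⊗[ℂ] (H ⊗[ℂ] A), mul (mul x y) z = mul x (mul y z)) ∧
    (∀ x : A ⊗[ℂ] (H ⊗[ℂ] A),
      mul ((1 : A) ⊗ₜ[ℂ] ((1 : H) ⊗ₜ[ℂ] (1 : A))) x = x ∧
      mul x ((1 : A) ⊗ₜ[ℂ] ((1 : H) ⊗ₜ[ℂ] (1 : A))) = x) := by
  have hcm := ConnesMoscovici.isCMProduct_of_sum_tmul hmul
  have hρa' := ConnesMoscovici.flip_mul_of_sum_tmul hρa
  exact ⟨hcm.mul_assoc hρm hρa', fun x => ⟨hcm.one_mul hρ1 x, hcm.mul_one hρu x⟩⟩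
end

section
/- Let H be a Hopf algebra over ℂ and A a left H-module algebra. The Kadison algebra (A ⊗ A^op) ⋈ H with multiplication (a⊗b⊗h)·(a'⊗b'⊗h') = a(h₍₁₎▷a') ⊗ b'(S(h'₍₂₎)▷b) ⊗ h₍₂₎h'₍₁₎ and the Connes–Moscovici algebra A ⋊ H ⋉ A^op are isomorphic as algebras via χ(a⊗b⊗h) = a ⊗ h₍₁₎ ⊗ h₍₂₎▷b, with inverse χ⁻¹(a⊗h⊗b) = a ⊗ S(h₍₂₎)▷b ⊗ h₍₁₎. -/
open TensorProduct

set_option synthInstance.maxHeartbeats 1000000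
set_option maxHeartbeats 1000000

namespace KIC


theorem sum_concat {M : Type*} [AddCommMonoid M] (n m : ℕ) (F G : ℕ → M) :
    ∑ i ∈ Finset.range (n + m), (if i < n then F i else G (i - n)) =
      (∑ i ∈ Finset.range n, F i) + ∑ i ∈ Finset.range m, G i := by
  rw [Finset.sum_range_add]
  congr 1
  · exact Finset.sum_congr rfl fun i hi => by simp [Finset.mem_range.mp hi]
  · refine Finset.sum_congr rfl fun i _ => ?_
    have h1 : ¬ (n + i < n) := by omega
    simp [h1]

variable {R : Type*} [CommRing R]
variable {M N P : Type*} [AddCommGroup M] [Module R M] [AddCommGroup N] [Module R N]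
  [AddCommGroup P] [Module R P]

theorem rep2 (x : M ⊗[R] N) :
    ∃ (n : ℕ) (f : ℕ → M) (g : ℕ → N), x = ∑ i ∈ Finset.range n, f i ⊗ₜ[R] g i := by
  induction x with
  | zero => exact ⟨0, 0, 0, by simp⟩
  | tmul a b => exact ⟨1, fun _ => a, fun _ => b, by simp⟩
  | add x y hx hy =>
    obtain ⟨n, f, g, hx⟩ := hx
    obtain ⟨m, f', g', hy⟩ := hy
    refine ⟨n + m, fun i => if i < n then f i else f' (i - n),
      fun i => if i < n then g i else g' (i - n), ?_⟩
    rw [hx, hy, ← sum_concat n m (fun i => f i ⊗ₜ[R] g i) (fun i => f' i ⊗ₜ[R] g' i)]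
    exact (Finset.sum_congr rfl fun i _ => by split_ifs with hc <;> simp [hc]).symm

theorem rep3 (x : M ⊗[R] (N ⊗[R] P)) :
    ∃ (n : ℕ) (f : ℕ → M) (g : ℕ → N) (k : ℕ → P),
      x = ∑ i ∈ Finset.range n, f i ⊗ₜ[R] (g i ⊗ₜ[R] k i) := by
  induction x with
  | zero => exact ⟨0, 0, 0, 0, by simp⟩
  | tmul a y =>
    obtain ⟨n, g, k, hy⟩ := rep2 y
    exact ⟨n, fun _ => a, g, k, by rw [hy, tmul_sum]⟩
  | add x y hx hy =>
    obtain ⟨n, f, g, k, hx⟩ := hx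
    obtain ⟨m, f', g', k', hy⟩ := hy
    refine ⟨n + m, fun i => if i < n then f i else f' (i - n),
      fun i => if i < n then g i else g' (i - n),
      fun i => if i < n then k i else k' (i - n), ?_⟩
    rw [hx, hy, ← sum_concat n m (fun i => f i ⊗ₜ[R] (g i ⊗ₜ[R] k i))
      (fun i => f' i ⊗ₜ[R] (g' i ⊗ₜ[R] k' i))]
    exact (Finset.sum_congr rfl fun i _ => by split_ifs with hc <;> simp [hc]).symm




variable {H : Type*} [Ring H] [HopfAlgebra ℂ H]

theorem counit_rep {h : H} {n : ℕ} {f g : ℕ → H}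
    (hre : Coalgebra.comul (R := ℂ) h = ∑ i ∈ Finset.range n, f i ⊗ₜ[ℂ] g i) :
    ∑ i ∈ Finset.range n, Coalgebra.counit (R := ℂ) (g i) • f i = h := by
  have h1 := Coalgebra.lTensor_counit_comul (R := ℂ) h
  rw [hre, map_sum] at h1
  have h2 := congrArg (TensorProduct.rid ℂ H) h1
  rw [map_sum] at h2
  simpa [LinearMap.lTensor_tmul, rid_tmul] using h2

theorem antipode_mul_rep {h : H} {n : ℕ} {f g : ℕ → H}
    (hre : Coalgebra.comul (R := ℂ) h = ∑ i ∈ Finset.range n, f i ⊗ₜ[ℂ] g i) :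
    ∑ i ∈ Finset.range n, HopfAlgebra.antipode (R := ℂ) (f i) * g i =
      Coalgebra.counit (R := ℂ) h • (1 : H) := by
  have h1 := HopfAlgebra.mul_antipode_rTensor_comul_apply (R := ℂ) h
  rw [hre, map_sum, map_sum] at h1
  simpa [LinearMap.rTensor_tmul, LinearMap.mul'_apply, Algebra.algebraMap_eq_smul_one] using h1

theorem mul_antipode_rep {h : H} {n : ℕ} {f g : ℕ → H}
    (hre : Coalgebra.comul (R := ℂ) h = ∑ i ∈ Finset.range n, f i ⊗ₜ[ℂ] g i) :
    ∑ i ∈ Finset.range n, f i * HopfAlgebra.antipode (R := ℂ) (g i) =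
      Coalgebra.counit (R := ℂ) h • (1 : H) := by
  have h1 := HopfAlgebra.mul_antipode_lTensor_comul_apply (R := ℂ) h
  rw [hre, map_sum, map_sum] at h1
  simpa [LinearMap.lTensor_tmul, LinearMap.mul'_apply, Algebra.algebraMap_eq_smul_one] using h1

theorem comul_mul_rep {x y : H} {n m : ℕ} {f g f' g' : ℕ → H}
    (hx : Coalgebra.comul (R := ℂ) x = ∑ i ∈ Finset.range n, f i ⊗ₜ[ℂ] g i)
    (hy : Coalgebra.comul (R := ℂ) y = ∑ j ∈ Finset.range m, f' j ⊗ₜ[ℂ] g' j) :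
    Coalgebra.comul (R := ℂ) (x * y) =
      ∑ i ∈ Finset.range n, ∑ j ∈ Finset.range m, (f i * f' j) ⊗ₜ[ℂ] (g i * g' j) := by
  rw [Bialgebra.comul_mul, hx, hy, Finset.sum_mul_sum]
  simp [Algebra.TensorProduct.tmul_mul_tmul]

theorem coassoc_rep {h : H} {n : ℕ} {f g : ℕ → H}
    (hre : Coalgebra.comul (R := ℂ) h = ∑ i ∈ Finset.range n, f i ⊗ₜ[ℂ] g i)
    {m : ℕ → ℕ} {p q : ℕ → ℕ → H}
    (hp : ∀ i, Coalgebra.comul (R := ℂ) (f i) = ∑ j ∈ Finset.range (m i), p i j ⊗ₜ[ℂ] q i j)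
    {m' : ℕ → ℕ} {u v : ℕ → ℕ → H}
    (hu : ∀ i, Coalgebra.comul (R := ℂ) (g i) = ∑ j ∈ Finset.range (m' i), u i j ⊗ₜ[ℂ] v i j) :
    ∑ i ∈ Finset.range n, ∑ j ∈ Finset.range (m i), p i j ⊗ₜ[ℂ] (q i j ⊗ₜ[ℂ] g i)
      = ∑ i ∈ Finset.range n, ∑ j ∈ Finset.range (m' i), f i ⊗ₜ[ℂ] (u i j ⊗ₜ[ℂ] v i j) := by
  have L : (TensorProduct.assoc ℂ H H H)
      ((Coalgebra.comul (R := ℂ)).rTensor H (Coalgebra.comul (R := ℂ) h)) =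
      ∑ i ∈ Finset.range n, ∑ j ∈ Finset.range (m i), p i j ⊗ₜ[ℂ] (q i j ⊗ₜ[ℂ] g i) := by
    rw [hre, map_sum, map_sum]
    refine Finset.sum_congr rfl fun i _ => ?_
    rw [LinearMap.rTensor_tmul, hp i, TensorProduct.sum_tmul, map_sum]
    exact Finset.sum_congr rfl fun j _ => by rw [TensorProduct.assoc_tmul]
  have R : (Coalgebra.comul (R := ℂ)).lTensor H (Coalgebra.comul (R := ℂ) h) =
      ∑ i ∈ Finset.range n, ∑ j ∈ Finset.range (m' i), f i ⊗ₜ[ℂ] (u i j ⊗ₜ[ℂ] v i j) := by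
    rw [hre, map_sum]
    refine Finset.sum_congr rfl fun i _ => ?_
    rw [LinearMap.lTensor_tmul, hu i, TensorProduct.tmul_sum]
  rw [← L, Coalgebra.coassoc_apply, R]




variable {H : Type*} [Ring H] [HopfAlgebra ℂ H]

theorem coassoc4_rep {h : H} {n : ℕ} {f g : ℕ → H}
    (hre : Coalgebra.comul (R := ℂ) h = ∑ i ∈ Finset.range n, f i ⊗ₜ[ℂ] g i)
    {nf : ℕ → ℕ} {F G K : ℕ → ℕ → H}
    (hF : ∀ i, (Coalgebra.comul (R := ℂ)).lTensor H (Coalgebra.comul (R := ℂ) (f i)) =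
      ∑ k ∈ Finset.range (nf i), F i k ⊗ₜ[ℂ] (G i k ⊗ₜ[ℂ] K i k))
    {ng : ℕ → ℕ} {p q : ℕ → ℕ → H}
    (hg : ∀ i, Coalgebra.comul (R := ℂ) (g i) = ∑ k ∈ Finset.range (ng i), p i k ⊗ₜ[ℂ] q i k)
    {nq : ℕ → ℕ → ℕ} {u v : ℕ → ℕ → ℕ → H}
    (hq : ∀ i k, Coalgebra.comul (R := ℂ) (q i k) =
      ∑ m ∈ Finset.range (nq i k), u i k m ⊗ₜ[ℂ] v i k m) :
    ∑ i ∈ Finset.range n, ∑ k ∈ Finset.range (nf i),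
        F i k ⊗ₜ[ℂ] (G i k ⊗ₜ[ℂ] (K i k ⊗ₜ[ℂ] g i)) =
      ∑ i ∈ Finset.range n, ∑ k ∈ Finset.range (ng i), ∑ m ∈ Finset.range (nq i k),
        f i ⊗ₜ[ℂ] (p i k ⊗ₜ[ℂ] (u i k m ⊗ₜ[ℂ] v i k m)) := by
  set A1 : (H ⊗[ℂ] H) ⊗[ℂ] H →ₗ[ℂ] H ⊗[ℂ] (H ⊗[ℂ] H) :=
    (TensorProduct.assoc ℂ H H H).toLinearMap with hA1
  set A2 : (H ⊗[ℂ] (H ⊗[ℂ] H)) ⊗[ℂ] H →ₗ[ℂ] H ⊗[ℂ] ((H ⊗[ℂ] H) ⊗[ℂ] H) :=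
    (TensorProduct.assoc ℂ H (H ⊗[ℂ] H) H).toLinearMap with hA2
  have N1 : A2 ∘ₗ ((Coalgebra.comul (R := ℂ)).lTensor H).rTensor H =
      ((Coalgebra.comul (R := ℂ)).rTensor H).lTensor H ∘ₗ A1 :=
    TensorProduct.ext_threefold fun x y z => by
      simp [hA1, hA2, LinearMap.rTensor_tmul, LinearMap.lTensor_tmul, TensorProduct.assoc_tmul]
  -- left side equals the canonical 4-fold comultiplication
  have L : ∑ i ∈ Finset.range n, ∑ k ∈ Finset.range (nf i),
        F i k ⊗ₜ[ℂ] (G i k ⊗ₜ[ℂ] (K i k ⊗ₜ[ℂ] g i)) =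
      (A1.lTensor H) (A2 (∑ i ∈ Finset.range n,
        ((Coalgebra.comul (R := ℂ)).lTensor H (Coalgebra.comul (R := ℂ) (f i))) ⊗ₜ[ℂ] g i)) := by
    rw [map_sum, map_sum]
    refine Finset.sum_congr rfl fun i _ => ?_
    rw [hF i, TensorProduct.sum_tmul, map_sum, map_sum]
    refine Finset.sum_congr rfl fun k _ => ?_
    simp [hA1, hA2, TensorProduct.assoc_tmul, LinearMap.lTensor_tmul]
  have M0 : (∑ i ∈ Finset.range n,
        ((Coalgebra.comul (R := ℂ)).lTensor H (Coalgebra.comul (R := ℂ) (f i))) ⊗ₜ[ℂ] g i) =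
      ((Coalgebra.comul (R := ℂ)).lTensor H).rTensor H
        ((Coalgebra.comul (R := ℂ)).rTensor H (Coalgebra.comul (R := ℂ) h)) := by
    rw [hre, map_sum, map_sum]
    exact Finset.sum_congr rfl fun i _ => by
      rw [LinearMap.rTensor_tmul, LinearMap.rTensor_tmul]
  have M1 : (A1.lTensor H) (A2 (((Coalgebra.comul (R := ℂ)).lTensor H).rTensor H
        ((Coalgebra.comul (R := ℂ)).rTensor H (Coalgebra.comul (R := ℂ) h)))) =
      (A1.lTensor H) (((Coalgebra.comul (R := ℂ)).rTensor H).lTensor H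
        ((Coalgebra.comul (R := ℂ)).lTensor H (Coalgebra.comul (R := ℂ) h))) := by
    have hN := LinearMap.congr_fun N1
      ((Coalgebra.comul (R := ℂ)).rTensor H (Coalgebra.comul (R := ℂ) h))
    simp only [LinearMap.comp_apply] at hN
    rw [hN]
    congr 1
    congr 1
    simpa [hA1] using Coalgebra.coassoc_apply (R := ℂ) h
  have R : (A1.lTensor H) (((Coalgebra.comul (R := ℂ)).rTensor H).lTensor H
        ((Coalgebra.comul (R := ℂ)).lTensor H (Coalgebra.comul (R := ℂ) h))) =
      ∑ i ∈ Finset.range n, ∑ k ∈ Finset.range (ng i), ∑ m ∈ Finset.range (nq i k),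
        f i ⊗ₜ[ℂ] (p i k ⊗ₜ[ℂ] (u i k m ⊗ₜ[ℂ] v i k m)) := by
    rw [hre, map_sum, map_sum, map_sum]
    refine Finset.sum_congr rfl fun i _ => ?_
    rw [LinearMap.lTensor_tmul, LinearMap.lTensor_tmul, LinearMap.lTensor_tmul]
    have hco : A1 ((Coalgebra.comul (R := ℂ)).rTensor H (Coalgebra.comul (R := ℂ) (g i))) =
        (Coalgebra.comul (R := ℂ)).lTensor H (Coalgebra.comul (R := ℂ) (g i)) := by
      simpa [hA1] using Coalgebra.coassoc_apply (R := ℂ) (g i)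
    rw [hco, hg i, map_sum, TensorProduct.tmul_sum]
    refine Finset.sum_congr rfl fun k _ => ?_
    rw [LinearMap.lTensor_tmul, hq i k, TensorProduct.tmul_sum, TensorProduct.tmul_sum]
  rw [L, M0, M1, R]


theorem coassoc4_rep' {H : Type*} [Ring H] [HopfAlgebra ℂ H]
    {h : H} {n : ℕ} {f g : ℕ → H}
    (hre : Coalgebra.comul (R := ℂ) h = ∑ i ∈ Finset.range n, f i ⊗ₜ[ℂ] g i)
    {nr : ℕ → ℕ} {r s : ℕ → ℕ → H}
    (hr : ∀ i, Coalgebra.comul (R := ℂ) (f i) = ∑ l ∈ Finset.range (nr i), r i l ⊗ₜ[ℂ] s i l)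
    {nc : ℕ → ℕ → ℕ} {c d : ℕ → ℕ → ℕ → H}
    (hs : ∀ i l, Coalgebra.comul (R := ℂ) (s i l) =
      ∑ e ∈ Finset.range (nc i l), c i l e ⊗ₜ[ℂ] d i l e)
    {ng : ℕ → ℕ} {p q : ℕ → ℕ → H}
    (hg : ∀ i, Coalgebra.comul (R := ℂ) (g i) = ∑ k ∈ Finset.range (ng i), p i k ⊗ₜ[ℂ] q i k)
    {nq : ℕ → ℕ → ℕ} {u v : ℕ → ℕ → ℕ → H}
    (hq : ∀ i k, Coalgebra.comul (R := ℂ) (q i k) =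
      ∑ m ∈ Finset.range (nq i k), u i k m ⊗ₜ[ℂ] v i k m) :
    ∑ i ∈ Finset.range n, ∑ l ∈ Finset.range (nr i), ∑ e ∈ Finset.range (nc i l),
        r i l ⊗ₜ[ℂ] (c i l e ⊗ₜ[ℂ] (d i l e ⊗ₜ[ℂ] g i)) =
      ∑ i ∈ Finset.range n, ∑ k ∈ Finset.range (ng i), ∑ m ∈ Finset.range (nq i k),
        f i ⊗ₜ[ℂ] (p i k ⊗ₜ[ℂ] (u i k m ⊗ₜ[ℂ] v i k m)) := by
  have hD : ∀ i, (Coalgebra.comul (R := ℂ)).lTensor H (Coalgebra.comul (R := ℂ) (f i)) =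
      ∑ l ∈ Finset.range (nr i), ∑ e ∈ Finset.range (nc i l),
        r i l ⊗ₜ[ℂ] (c i l e ⊗ₜ[ℂ] d i l e) := by
    intro i
    rw [hr i, map_sum]
    refine Finset.sum_congr rfl fun l _ => ?_
    rw [LinearMap.lTensor_tmul, hs i l, TensorProduct.tmul_sum]
  set A1 : (H ⊗[ℂ] H) ⊗[ℂ] H →ₗ[ℂ] H ⊗[ℂ] (H ⊗[ℂ] H) :=
    (TensorProduct.assoc ℂ H H H).toLinearMap with hA1
  set A2 : (H ⊗[ℂ] (H ⊗[ℂ] H)) ⊗[ℂ] H →ₗ[ℂ] H ⊗[ℂ] ((H ⊗[ℂ] H) ⊗[ℂ] H) :=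
    (TensorProduct.assoc ℂ H (H ⊗[ℂ] H) H).toLinearMap with hA2
  have N1 : A2 ∘ₗ ((Coalgebra.comul (R := ℂ)).lTensor H).rTensor H =
      ((Coalgebra.comul (R := ℂ)).rTensor H).lTensor H ∘ₗ A1 :=
    TensorProduct.ext_threefold fun x y z => by
      simp [hA1, hA2, LinearMap.rTensor_tmul, LinearMap.lTensor_tmul, TensorProduct.assoc_tmul]
  have L : ∑ i ∈ Finset.range n, ∑ l ∈ Finset.range (nr i), ∑ e ∈ Finset.range (nc i l),
        r i l ⊗ₜ[ℂ] (c i l e ⊗ₜ[ℂ] (d i l e ⊗ₜ[ℂ] g i)) =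
      (A1.lTensor H) (A2 (∑ i ∈ Finset.range n,
        ((Coalgebra.comul (R := ℂ)).lTensor H (Coalgebra.comul (R := ℂ) (f i))) ⊗ₜ[ℂ] g i)) := by
    rw [map_sum, map_sum]
    refine Finset.sum_congr rfl fun i _ => ?_
    rw [hD i, TensorProduct.sum_tmul, map_sum, map_sum]
    refine Finset.sum_congr rfl fun l _ => ?_
    rw [TensorProduct.sum_tmul, map_sum, map_sum]
    refine Finset.sum_congr rfl fun e _ => ?_
    simp [hA1, hA2, TensorProduct.assoc_tmul, LinearMap.lTensor_tmul]
  have M0 : (∑ i ∈ Finset.range n,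
        ((Coalgebra.comul (R := ℂ)).lTensor H (Coalgebra.comul (R := ℂ) (f i))) ⊗ₜ[ℂ] g i) =
      ((Coalgebra.comul (R := ℂ)).lTensor H).rTensor H
        ((Coalgebra.comul (R := ℂ)).rTensor H (Coalgebra.comul (R := ℂ) h)) := by
    rw [hre, map_sum, map_sum]
    exact Finset.sum_congr rfl fun i _ => by
      rw [LinearMap.rTensor_tmul, LinearMap.rTensor_tmul]
  have M1 : (A1.lTensor H) (A2 (((Coalgebra.comul (R := ℂ)).lTensor H).rTensor H
        ((Coalgebra.comul (R := ℂ)).rTensor H (Coalgebra.comul (R := ℂ) h)))) =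
      (A1.lTensor H) (((Coalgebra.comul (R := ℂ)).rTensor H).lTensor H
        ((Coalgebra.comul (R := ℂ)).lTensor H (Coalgebra.comul (R := ℂ) h))) := by
    have hN := LinearMap.congr_fun N1
      ((Coalgebra.comul (R := ℂ)).rTensor H (Coalgebra.comul (R := ℂ) h))
    simp only [LinearMap.comp_apply] at hN
    rw [hN]
    congr 1
    congr 1
    simpa [hA1] using Coalgebra.coassoc_apply (R := ℂ) h
  have R : (A1.lTensor H) (((Coalgebra.comul (R := ℂ)).rTensor H).lTensor H
        ((Coalgebra.comul (R := ℂ)).lTensor H (Coalgebra.comul (R := ℂ) h))) =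
      ∑ i ∈ Finset.range n, ∑ k ∈ Finset.range (ng i), ∑ m ∈ Finset.range (nq i k),
        f i ⊗ₜ[ℂ] (p i k ⊗ₜ[ℂ] (u i k m ⊗ₜ[ℂ] v i k m)) := by
    rw [hre, map_sum, map_sum, map_sum]
    refine Finset.sum_congr rfl fun i _ => ?_
    rw [LinearMap.lTensor_tmul, LinearMap.lTensor_tmul, LinearMap.lTensor_tmul]
    have hco : A1 ((Coalgebra.comul (R := ℂ)).rTensor H (Coalgebra.comul (R := ℂ) (g i))) =
        (Coalgebra.comul (R := ℂ)).lTensor H (Coalgebra.comul (R := ℂ) (g i)) := by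
      simpa [hA1] using Coalgebra.coassoc_apply (R := ℂ) (g i)
    rw [hco, hg i, map_sum, TensorProduct.tmul_sum]
    refine Finset.sum_congr rfl fun k _ => ?_
    rw [LinearMap.lTensor_tmul, hq i k, TensorProduct.tmul_sum, TensorProduct.tmul_sum]
  rw [L, M0, M1, R]



variable {H A : Type*} [Ring H] [HopfAlgebra ℂ H] [Ring A] [Algebra ℂ A]

theorem key1 (ρ : H →ₗ[ℂ] A →ₗ[ℂ] A)
    (hρ1 : ρ 1 = LinearMap.id)
    (hρm : ∀ g h : H, ρ (g * h) = ρ g ∘ₗ ρ h)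
    (χ : (A ⊗[ℂ] (A ⊗[ℂ] H)) →ₗ[ℂ] (A ⊗[ℂ] (H ⊗[ℂ] A)))
    (hχ : ∀ (a b : A) (h : H) (ι : Type) (t : Finset ι) (f g : ι → H),
      Coalgebra.comul (R := ℂ) h = ∑ i ∈ t, f i ⊗ₜ[ℂ] g i →
      χ (a ⊗ₜ[ℂ] (b ⊗ₜ[ℂ] h)) = ∑ i ∈ t, a ⊗ₜ[ℂ] (f i ⊗ₜ[ℂ] ρ (g i) b))
    (χinv : (A ⊗[ℂ] (H ⊗[ℂ] A)) →ₗ[ℂ] (A ⊗[ℂ] (A ⊗[ℂ] H)))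
    (hχinv : ∀ (a b : A) (h : H) (ι : Type) (t : Finset ι) (f g : ι → H),
      Coalgebra.comul (R := ℂ) h = ∑ i ∈ t, f i ⊗ₜ[ℂ] g i →
      χinv (a ⊗ₜ[ℂ] (h ⊗ₜ[ℂ] b)) =
        ∑ i ∈ t, a ⊗ₜ[ℂ] (ρ (HopfAlgebra.antipode (R := ℂ) (g i)) b ⊗ₜ[ℂ] f i))
    (a b : A) (h : H) :
    χinv (χ (a ⊗ₜ[ℂ] (b ⊗ₜ[ℂ] h))) = a ⊗ₜ[ℂ] (b ⊗ₜ[ℂ] h) := by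
  obtain ⟨n, f, g, hre⟩ := rep2 (Coalgebra.comul (R := ℂ) h)
  choose m p q hp using fun i => rep2 (Coalgebra.comul (R := ℂ) (f i))
  choose m' u v hu using fun i => rep2 (Coalgebra.comul (R := ℂ) (g i))
  rw [hχ a b h ℕ (Finset.range n) f g hre, map_sum]
  have step : ∀ i, χinv (a ⊗ₜ[ℂ] (f i ⊗ₜ[ℂ] ρ (g i) b)) =
      ∑ j ∈ Finset.range (m i),
        a ⊗ₜ[ℂ] (ρ (HopfAlgebra.antipode (R := ℂ) (q i j) * g i) b ⊗ₜ[ℂ] p i j) := by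
    intro i
    rw [hχinv a (ρ (g i) b) (f i) ℕ (Finset.range (m i)) (p i) (q i) (hp i)]
    refine Finset.sum_congr rfl fun j _ => ?_
    rw [hρm]; rfl
  rw [Finset.sum_congr rfl fun i _ => step i]
  set M : H ⊗[ℂ] (H ⊗[ℂ] H) →ₗ[ℂ] A ⊗[ℂ] (A ⊗[ℂ] H) :=
    TensorProduct.mk ℂ A (A ⊗[ℂ] H) a ∘ₗ (TensorProduct.comm ℂ H A).toLinearMap ∘ₗ
      LinearMap.lTensor H (ρ.flip b ∘ₗ LinearMap.mul' ℂ H ∘ₗ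
        LinearMap.rTensor H (HopfAlgebra.antipode (R := ℂ))) with hMdef
  have hM : ∀ x y z : H, M (x ⊗ₜ[ℂ] (y ⊗ₜ[ℂ] z)) =
      a ⊗ₜ[ℂ] (ρ (HopfAlgebra.antipode (R := ℂ) y * z) b ⊗ₜ[ℂ] x) := by
    intro x y z
    simp [hMdef, LinearMap.mul'_apply]
  calc
    ∑ i ∈ Finset.range n, ∑ j ∈ Finset.range (m i),
        a ⊗ₜ[ℂ] (ρ (HopfAlgebra.antipode (R := ℂ) (q i j) * g i) b ⊗ₜ[ℂ] p i j)
      = M (∑ i ∈ Finset.range n, ∑ j ∈ Finset.range (m i),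
          p i j ⊗ₜ[ℂ] (q i j ⊗ₜ[ℂ] g i)) := by
        rw [map_sum]
        refine Finset.sum_congr rfl fun i _ => ?_
        rw [map_sum]
        exact Finset.sum_congr rfl fun j _ => (hM _ _ _).symm
    _ = M (∑ i ∈ Finset.range n, ∑ j ∈ Finset.range (m' i),
          f i ⊗ₜ[ℂ] (u i j ⊗ₜ[ℂ] v i j)) := by
        rw [coassoc_rep hre hp hu]
    _ = ∑ i ∈ Finset.range n, ∑ j ∈ Finset.range (m' i),
          a ⊗ₜ[ℂ] (ρ (HopfAlgebra.antipode (R := ℂ) (u i j) * v i j) b ⊗ₜ[ℂ] f i) := by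
        rw [map_sum]
        refine Finset.sum_congr rfl fun i _ => ?_
        rw [map_sum]
        exact Finset.sum_congr rfl fun j _ => hM _ _ _
    _ = ∑ i ∈ Finset.range n,
          Coalgebra.counit (R := ℂ) (g i) • (a ⊗ₜ[ℂ] (b ⊗ₜ[ℂ] f i)) := by
        refine Finset.sum_congr rfl fun i _ => ?_
        set Ni : H →ₗ[ℂ] A ⊗[ℂ] (A ⊗[ℂ] H) :=
          TensorProduct.mk ℂ A (A ⊗[ℂ] H) a ∘ₗ (TensorProduct.mk ℂ A H).flip (f i) ∘ₗ
            ρ.flip b with hNidef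
        have hNi : ∀ w, Ni w = a ⊗ₜ[ℂ] (ρ w b ⊗ₜ[ℂ] f i) := fun w => by simp [hNidef]
        calc
          ∑ j ∈ Finset.range (m' i),
              a ⊗ₜ[ℂ] (ρ (HopfAlgebra.antipode (R := ℂ) (u i j) * v i j) b ⊗ₜ[ℂ] f i)
            = Ni (∑ j ∈ Finset.range (m' i),
                HopfAlgebra.antipode (R := ℂ) (u i j) * v i j) := by
              rw [map_sum]
              exact Finset.sum_congr rfl fun j _ => (hNi _).symm
          _ = Ni (Coalgebra.counit (R := ℂ) (g i) • (1 : H)) := by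
              rw [antipode_mul_rep (hu i)]
          _ = Coalgebra.counit (R := ℂ) (g i) • (a ⊗ₜ[ℂ] (b ⊗ₜ[ℂ] f i)) := by
              rw [map_smul, hNi, hρ1]; rfl
    _ = a ⊗ₜ[ℂ] (b ⊗ₜ[ℂ] h) := by
        conv_rhs => rw [← counit_rep hre]
        rw [TensorProduct.tmul_sum, TensorProduct.tmul_sum]
        exact Finset.sum_congr rfl fun i _ => by
          rw [TensorProduct.tmul_smul, TensorProduct.tmul_smul]

theorem key2 (ρ : H →ₗ[ℂ] A →ₗ[ℂ] A)
    (hρ1 : ρ 1 = LinearMap.id)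
    (hρm : ∀ g h : H, ρ (g * h) = ρ g ∘ₗ ρ h)
    (χ : (A ⊗[ℂ] (A ⊗[ℂ] H)) →ₗ[ℂ] (A ⊗[ℂ] (H ⊗[ℂ] A)))
    (hχ : ∀ (a b : A) (h : H) (ι : Type) (t : Finset ι) (f g : ι → H),
      Coalgebra.comul (R := ℂ) h = ∑ i ∈ t, f i ⊗ₜ[ℂ] g i →
      χ (a ⊗ₜ[ℂ] (b ⊗ₜ[ℂ] h)) = ∑ i ∈ t, a ⊗ₜ[ℂ] (f i ⊗ₜ[ℂ] ρ (g i) b))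
    (χinv : (A ⊗[ℂ] (H ⊗[ℂ] A)) →ₗ[ℂ] (A ⊗[ℂ] (A ⊗[ℂ] H)))
    (hχinv : ∀ (a b : A) (h : H) (ι : Type) (t : Finset ι) (f g : ι → H),
      Coalgebra.comul (R := ℂ) h = ∑ i ∈ t, f i ⊗ₜ[ℂ] g i →
      χinv (a ⊗ₜ[ℂ] (h ⊗ₜ[ℂ] b)) =
        ∑ i ∈ t, a ⊗ₜ[ℂ] (ρ (HopfAlgebra.antipode (R := ℂ) (g i)) b ⊗ₜ[ℂ] f i))
    (a b : A) (h : H) :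
    χ (χinv (a ⊗ₜ[ℂ] (h ⊗ₜ[ℂ] b))) = a ⊗ₜ[ℂ] (h ⊗ₜ[ℂ] b) := by
  obtain ⟨n, f, g, hre⟩ := rep2 (Coalgebra.comul (R := ℂ) h)
  choose m p q hp using fun i => rep2 (Coalgebra.comul (R := ℂ) (f i))
  choose m' u v hu using fun i => rep2 (Coalgebra.comul (R := ℂ) (g i))
  rw [hχinv a b h ℕ (Finset.range n) f g hre, map_sum]
  have step : ∀ i, χ (a ⊗ₜ[ℂ] (ρ (HopfAlgebra.antipode (R := ℂ) (g i)) b ⊗ₜ[ℂ] f i)) =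
      ∑ j ∈ Finset.range (m i),
        a ⊗ₜ[ℂ] (p i j ⊗ₜ[ℂ] ρ (q i j * HopfAlgebra.antipode (R := ℂ) (g i)) b) := by
    intro i
    rw [hχ a (ρ (HopfAlgebra.antipode (R := ℂ) (g i)) b) (f i) ℕ
      (Finset.range (m i)) (p i) (q i) (hp i)]
    refine Finset.sum_congr rfl fun j _ => ?_
    rw [hρm]; rfl
  rw [Finset.sum_congr rfl fun i _ => step i]
  set M : H ⊗[ℂ] (H ⊗[ℂ] H) →ₗ[ℂ] A ⊗[ℂ] (H ⊗[ℂ] A) :=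
    TensorProduct.mk ℂ A (H ⊗[ℂ] A) a ∘ₗ
      LinearMap.lTensor H (ρ.flip b ∘ₗ LinearMap.mul' ℂ H ∘ₗ
        LinearMap.lTensor H (HopfAlgebra.antipode (R := ℂ))) with hMdef
  have hM : ∀ x y z : H, M (x ⊗ₜ[ℂ] (y ⊗ₜ[ℂ] z)) =
      a ⊗ₜ[ℂ] (x ⊗ₜ[ℂ] ρ (y * HopfAlgebra.antipode (R := ℂ) z) b) := by
    intro x y z
    simp [hMdef, LinearMap.mul'_apply]
  calc
    ∑ i ∈ Finset.range n, ∑ j ∈ Finset.range (m i),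
        a ⊗ₜ[ℂ] (p i j ⊗ₜ[ℂ] ρ (q i j * HopfAlgebra.antipode (R := ℂ) (g i)) b)
      = M (∑ i ∈ Finset.range n, ∑ j ∈ Finset.range (m i),
          p i j ⊗ₜ[ℂ] (q i j ⊗ₜ[ℂ] g i)) := by
        rw [map_sum]
        refine Finset.sum_congr rfl fun i _ => ?_
        rw [map_sum]
        exact Finset.sum_congr rfl fun j _ => (hM _ _ _).symm
    _ = M (∑ i ∈ Finset.range n, ∑ j ∈ Finset.range (m' i),
          f i ⊗ₜ[ℂ] (u i j ⊗ₜ[ℂ] v i j)) := by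
        rw [coassoc_rep hre hp hu]
    _ = ∑ i ∈ Finset.range n, ∑ j ∈ Finset.range (m' i),
          a ⊗ₜ[ℂ] (f i ⊗ₜ[ℂ] ρ (u i j * HopfAlgebra.antipode (R := ℂ) (v i j)) b) := by
        rw [map_sum]
        refine Finset.sum_congr rfl fun i _ => ?_
        rw [map_sum]
        exact Finset.sum_congr rfl fun j _ => hM _ _ _
    _ = ∑ i ∈ Finset.range n,
          Coalgebra.counit (R := ℂ) (g i) • (a ⊗ₜ[ℂ] (f i ⊗ₜ[ℂ] b)) := by
        refine Finset.sum_congr rfl fun i _ => ?_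
        set Ni : H →ₗ[ℂ] A ⊗[ℂ] (H ⊗[ℂ] A) :=
          TensorProduct.mk ℂ A (H ⊗[ℂ] A) a ∘ₗ TensorProduct.mk ℂ H A (f i) ∘ₗ
            ρ.flip b with hNidef
        have hNi : ∀ w, Ni w = a ⊗ₜ[ℂ] (f i ⊗ₜ[ℂ] ρ w b) := fun w => by simp [hNidef]
        calc
          ∑ j ∈ Finset.range (m' i),
              a ⊗ₜ[ℂ] (f i ⊗ₜ[ℂ] ρ (u i j * HopfAlgebra.antipode (R := ℂ) (v i j)) b)
            = Ni (∑ j ∈ Finset.range (m' i),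
                u i j * HopfAlgebra.antipode (R := ℂ) (v i j)) := by
              rw [map_sum]
              exact Finset.sum_congr rfl fun j _ => (hNi _).symm
          _ = Ni (Coalgebra.counit (R := ℂ) (g i) • (1 : H)) := by
              rw [mul_antipode_rep (hu i)]
          _ = Coalgebra.counit (R := ℂ) (g i) • (a ⊗ₜ[ℂ] (f i ⊗ₜ[ℂ] b)) := by
              rw [map_smul, hNi, hρ1]; rfl
    _ = a ⊗ₜ[ℂ] (h ⊗ₜ[ℂ] b) := by
        conv_rhs => rw [← counit_rep hre]
        rw [TensorProduct.sum_tmul, TensorProduct.tmul_sum]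
        refine Finset.sum_congr rfl fun i _ => ?_
        rw [← TensorProduct.smul_tmul', TensorProduct.tmul_smul]


theorem keymul {H A : Type*} [Ring H] [HopfAlgebra ℂ H] [Ring A] [Algebra ℂ A]
    (ρ : H →ₗ[ℂ] A →ₗ[ℂ] A)
    (hρm : ∀ g h : H, ρ (g * h) = ρ g ∘ₗ ρ h)
    (hρa : ∀ (h : H) (a b : A) (ι : Type) (t : Finset ι) (f g : ι → H),
      Coalgebra.comul (R := ℂ) h = ∑ i ∈ t, f i ⊗ₜ[ℂ] g i →
      ρ h (a * b) = ∑ i ∈ t, ρ (f i) a * ρ (g i) b)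
    (mulCM : (A ⊗[ℂ] (H ⊗[ℂ] A)) →ₗ[ℂ] (A ⊗[ℂ] (H ⊗[ℂ] A)) →ₗ[ℂ] (A ⊗[ℂ] (H ⊗[ℂ] A)))
    (hmulCM : ∀ (a a' b b' : A) (h h' : H) (ι : Type) (t : Finset ι) (f g k : ι → H),
      ((LinearMap.lTensor H (Coalgebra.comul (R := ℂ))) ∘ₗ Coalgebra.comul (R := ℂ)) h =
          ∑ i ∈ t, f i ⊗ₜ[ℂ] (g i ⊗ₜ[ℂ] k i) →
      mulCM (a ⊗ₜ[ℂ] (h ⊗ₜ[ℂ] b)) (a' ⊗ₜ[ℂ] (h' ⊗ₜ[ℂ] b')) =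
        ∑ i ∈ t, (a * ρ (f i) a') ⊗ₜ[ℂ] ((g i * h') ⊗ₜ[ℂ] (ρ (k i) b' * b)))
    (mulK : (A ⊗[ℂ] (A ⊗[ℂ] H)) →ₗ[ℂ] (A ⊗[ℂ] (A ⊗[ℂ] H)) →ₗ[ℂ] (A ⊗[ℂ] (A ⊗[ℂ] H)))
    (hmulK : ∀ (a a' b b' : A) (h h' : H) (ι κ : Type) (t : Finset ι) (t' : Finset κ)
        (f g : ι → H) (f' g' : κ → H),
      Coalgebra.comul (R := ℂ) h = ∑ i ∈ t, f i ⊗ₜ[ℂ] g i →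
      Coalgebra.comul (R := ℂ) h' = ∑ j ∈ t', f' j ⊗ₜ[ℂ] g' j →
      mulK (a ⊗ₜ[ℂ] (b ⊗ₜ[ℂ] h)) (a' ⊗ₜ[ℂ] (b' ⊗ₜ[ℂ] h')) =
        ∑ i ∈ t, ∑ j ∈ t',
          (a * ρ (f i) a') ⊗ₜ[ℂ]
            ((b' * ρ (HopfAlgebra.antipode (R := ℂ) (g' j)) b) ⊗ₜ[ℂ] (g i * f' j)))
    (χ : (A ⊗[ℂ] (A ⊗[ℂ] H)) →ₗ[ℂ] (A ⊗[ℂ] (H ⊗[ℂ] A)))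
    (hχ : ∀ (a b : A) (h : H) (ι : Type) (t : Finset ι) (f g : ι → H),
      Coalgebra.comul (R := ℂ) h = ∑ i ∈ t, f i ⊗ₜ[ℂ] g i →
      χ (a ⊗ₜ[ℂ] (b ⊗ₜ[ℂ] h)) = ∑ i ∈ t, a ⊗ₜ[ℂ] (f i ⊗ₜ[ℂ] ρ (g i) b))
    (a b a' b' : A) (h h' : H) :
    χ (mulK (a ⊗ₜ[ℂ] (b ⊗ₜ[ℂ] h)) (a' ⊗ₜ[ℂ] (b' ⊗ₜ[ℂ] h'))) =
      mulCM (χ (a ⊗ₜ[ℂ] (b ⊗ₜ[ℂ] h))) (χ (a' ⊗ₜ[ℂ] (b' ⊗ₜ[ℂ] h'))) := by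
  obtain ⟨n, f, g, hre⟩ := rep2 (Coalgebra.comul (R := ℂ) h)
  choose ng p q hg using fun i => rep2 (Coalgebra.comul (R := ℂ) (g i))
  choose nq u v hq using fun i k => rep2 (Coalgebra.comul (R := ℂ) (q i k))
  choose nF F G K hF using fun i =>
    rep3 ((Coalgebra.comul (R := ℂ)).lTensor H (Coalgebra.comul (R := ℂ) (f i)))
  obtain ⟨n', f', g', hre'⟩ := rep2 (Coalgebra.comul (R := ℂ) h')
  choose nr r s hr using fun j => rep2 (Coalgebra.comul (R := ℂ) (f' j))
  choose nc c d hc using fun j l => rep2 (Coalgebra.comul (R := ℂ) (s j l))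
  choose nw w x hw using fun j => rep2 (Coalgebra.comul (R := ℂ) (g' j))
  choose nz y z hz using fun j t => rep2 (Coalgebra.comul (R := ℂ) (x j t))
  -- RHS computation
  have hχx : χ (a ⊗ₜ[ℂ] (b ⊗ₜ[ℂ] h)) =
      ∑ i ∈ Finset.range n, a ⊗ₜ[ℂ] (f i ⊗ₜ[ℂ] ρ (g i) b) :=
    hχ a b h ℕ _ f g hre
  have hχy : χ (a' ⊗ₜ[ℂ] (b' ⊗ₜ[ℂ] h')) =
      ∑ j ∈ Finset.range n', a' ⊗ₜ[ℂ] (f' j ⊗ₜ[ℂ] ρ (g' j) b') :=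
    hχ a' b' h' ℕ _ f' g' hre'
  obtain ⟨Ψ, hΨ⟩ : ∃ Ψ : H ⊗[ℂ] (H ⊗[ℂ] (H ⊗[ℂ] H)) →ₗ[ℂ] A ⊗[ℂ] (H ⊗[ℂ] A),
      ∀ x1 x2 x3 x4 : H, Ψ (x1 ⊗ₜ[ℂ] (x2 ⊗ₜ[ℂ] (x3 ⊗ₜ[ℂ] x4))) =
        ∑ j ∈ Finset.range n',
          (a * ρ x1 a') ⊗ₜ[ℂ] ((x2 * f' j) ⊗ₜ[ℂ] (ρ (x3 * g' j) b' * ρ x4 b)) := by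
    refine ⟨∑ j ∈ Finset.range n',
      TensorProduct.map (LinearMap.mulLeft ℂ a ∘ₗ ρ.flip a')
        (TensorProduct.map (LinearMap.mulRight ℂ (f' j))
          (LinearMap.mul' ℂ A ∘ₗ
            TensorProduct.map (ρ.flip b' ∘ₗ LinearMap.mulRight ℂ (g' j)) (ρ.flip b))),
      fun x1 x2 x3 x4 => ?_⟩
    rw [LinearMap.sum_apply]
    exact Finset.sum_congr rfl fun j _ => by
      simp [TensorProduct.map_tmul, LinearMap.mul'_apply]
  have hMID : Ψ (∑ i ∈ Finset.range n, ∑ k ∈ Finset.range (ng i), ∑ m ∈ Finset.range (nq i k),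
        f i ⊗ₜ[ℂ] (p i k ⊗ₜ[ℂ] (u i k m ⊗ₜ[ℂ] v i k m))) =
      ∑ i ∈ Finset.range n, ∑ k ∈ Finset.range (ng i), ∑ m ∈ Finset.range (nq i k),
        ∑ j ∈ Finset.range n',
          (a * ρ (f i) a') ⊗ₜ[ℂ]
            ((p i k * f' j) ⊗ₜ[ℂ] (ρ (u i k m * g' j) b' * ρ (v i k m) b)) := by
    rw [map_sum]
    refine Finset.sum_congr rfl fun i _ => ?_
    rw [map_sum]
    refine Finset.sum_congr rfl fun k _ => ?_
    rw [map_sum]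
    exact Finset.sum_congr rfl fun m _ => hΨ _ _ _ _
  have hR : mulCM (χ (a ⊗ₜ[ℂ] (b ⊗ₜ[ℂ] h))) (χ (a' ⊗ₜ[ℂ] (b' ⊗ₜ[ℂ] h'))) =
      ∑ i ∈ Finset.range n, ∑ k ∈ Finset.range (ng i), ∑ m ∈ Finset.range (nq i k),
        ∑ j ∈ Finset.range n',
          (a * ρ (f i) a') ⊗ₜ[ℂ]
            ((p i k * f' j) ⊗ₜ[ℂ] (ρ (u i k m * g' j) b' * ρ (v i k m) b)) := by
    rw [hχx, hχy, map_sum]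
    have e1 : ∀ j : ℕ, mulCM (∑ i ∈ Finset.range n, a ⊗ₜ[ℂ] (f i ⊗ₜ[ℂ] ρ (g i) b))
          (a' ⊗ₜ[ℂ] (f' j ⊗ₜ[ℂ] ρ (g' j) b')) =
        ∑ i ∈ Finset.range n, mulCM (a ⊗ₜ[ℂ] (f i ⊗ₜ[ℂ] ρ (g i) b))
          (a' ⊗ₜ[ℂ] (f' j ⊗ₜ[ℂ] ρ (g' j) b')) := fun j => by
      rw [map_sum, LinearMap.sum_apply]
    rw [Finset.sum_congr rfl fun j _ => e1 j, Finset.sum_comm]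
    have step1 : ∀ i j, mulCM (a ⊗ₜ[ℂ] (f i ⊗ₜ[ℂ] ρ (g i) b))
          (a' ⊗ₜ[ℂ] (f' j ⊗ₜ[ℂ] ρ (g' j) b')) =
        ∑ k ∈ Finset.range (nF i),
          (a * ρ (F i k) a') ⊗ₜ[ℂ]
            ((G i k * f' j) ⊗ₜ[ℂ] (ρ (K i k * g' j) b' * ρ (g i) b)) := by
      intro i j
      rw [hmulCM a a' (ρ (g i) b) (ρ (g' j) b') (f i) (f' j) ℕ
        (Finset.range (nF i)) (F i) (G i) (K i)
        (by rw [LinearMap.comp_apply]; exact hF i)]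
      refine Finset.sum_congr rfl fun k _ => ?_
      rw [hρm (K i k) (g' j)]; rfl
    rw [Finset.sum_congr rfl fun i _ => Finset.sum_congr rfl fun j _ => step1 i j,
      Finset.sum_congr rfl fun i _ => Finset.sum_comm]
    have step2 : ∀ i, (∑ k ∈ Finset.range (nF i), ∑ j ∈ Finset.range n',
          (a * ρ (F i k) a') ⊗ₜ[ℂ]
            ((G i k * f' j) ⊗ₜ[ℂ] (ρ (K i k * g' j) b' * ρ (g i) b))) =
        ∑ k ∈ Finset.range (nF i), Ψ (F i k ⊗ₜ[ℂ] (G i k ⊗ₜ[ℂ] (K i k ⊗ₜ[ℂ] g i))) :=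
      fun i => Finset.sum_congr rfl fun k _ => (hΨ _ _ _ _).symm
    rw [Finset.sum_congr rfl fun i _ => step2 i]
    calc
      ∑ i ∈ Finset.range n, ∑ k ∈ Finset.range (nF i),
          Ψ (F i k ⊗ₜ[ℂ] (G i k ⊗ₜ[ℂ] (K i k ⊗ₜ[ℂ] g i)))
        = Ψ (∑ i ∈ Finset.range n, ∑ k ∈ Finset.range (nF i),
            F i k ⊗ₜ[ℂ] (G i k ⊗ₜ[ℂ] (K i k ⊗ₜ[ℂ] g i))) := by
          rw [map_sum]
          exact Finset.sum_congr rfl fun i _ => (map_sum Ψ _ _).symm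
      _ = Ψ (∑ i ∈ Finset.range n, ∑ k ∈ Finset.range (ng i), ∑ m ∈ Finset.range (nq i k),
            f i ⊗ₜ[ℂ] (p i k ⊗ₜ[ℂ] (u i k m ⊗ₜ[ℂ] v i k m))) := by
          rw [coassoc4_rep hre hF hg hq]
      _ = _ := hMID
  -- LHS computation
  have hL : χ (mulK (a ⊗ₜ[ℂ] (b ⊗ₜ[ℂ] h)) (a' ⊗ₜ[ℂ] (b' ⊗ₜ[ℂ] h'))) =
      ∑ i ∈ Finset.range n, ∑ k ∈ Finset.range (ng i), ∑ m ∈ Finset.range (nq i k),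
        ∑ j ∈ Finset.range n',
          (a * ρ (f i) a') ⊗ₜ[ℂ]
            ((p i k * f' j) ⊗ₜ[ℂ] (ρ (u i k m * g' j) b' * ρ (v i k m) b)) := by
    rw [hmulK a a' b b' h h' ℕ ℕ (Finset.range n) (Finset.range n') f g f' g' hre hre',
      map_sum, Finset.sum_congr rfl fun i _ => map_sum χ _ _]
    have step3 : ∀ i j,
        χ ((a * ρ (f i) a') ⊗ₜ[ℂ]
          ((b' * ρ (HopfAlgebra.antipode (R := ℂ) (g' j)) b) ⊗ₜ[ℂ] (g i * f' j))) =
        ∑ k ∈ Finset.range (ng i), ∑ l ∈ Finset.range (nr j),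
          ∑ m ∈ Finset.range (nq i k), ∑ e ∈ Finset.range (nc j l),
            (a * ρ (f i) a') ⊗ₜ[ℂ] ((p i k * r j l) ⊗ₜ[ℂ]
              (ρ (u i k m * c j l e) b' *
                ρ (v i k m * (d j l e * HopfAlgebra.antipode (R := ℂ) (g' j))) b)) := by
      intro i j
      have hrepmul : Coalgebra.comul (R := ℂ) (g i * f' j) =
          ∑ z ∈ Finset.range (ng i) ×ˢ Finset.range (nr j),
            (fun z : ℕ × ℕ => p i z.1 * r j z.2) z ⊗ₜ[ℂ]
              (fun z : ℕ × ℕ => q i z.1 * s j z.2) z := by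
        rw [Finset.sum_product]; exact comul_mul_rep (hg i) (hr j)
      rw [hχ _ _ _ (ℕ × ℕ) _ _ _ hrepmul, Finset.sum_product]
      refine Finset.sum_congr rfl fun k _ => Finset.sum_congr rfl fun l _ => ?_
      have hrepmul2 : Coalgebra.comul (R := ℂ) (q i k * s j l) =
          ∑ z ∈ Finset.range (nq i k) ×ˢ Finset.range (nc j l),
            (fun z : ℕ × ℕ => u i k z.1 * c j l z.2) z ⊗ₜ[ℂ]
              (fun z : ℕ × ℕ => v i k z.1 * d j l z.2) z := by
        rw [Finset.sum_product]; exact comul_mul_rep (hq i k) (hc j l)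
      rw [hρa _ _ _ (ℕ × ℕ) _ _ _ hrepmul2, Finset.sum_product]
      have expand : ∀ m' e',
          ρ (v i k m' * d j l e') (ρ (HopfAlgebra.antipode (R := ℂ) (g' j)) b) =
          ρ (v i k m' * (d j l e' * HopfAlgebra.antipode (R := ℂ) (g' j))) b := by
        intro m' e'
        rw [← mul_assoc,
          hρm (v i k m' * d j l e') (HopfAlgebra.antipode (R := ℂ) (g' j))]
        rfl
      simp only [expand, TensorProduct.tmul_sum]
    rw [Finset.sum_congr rfl fun i _ => Finset.sum_congr rfl fun j _ => step3 i j]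
    have reorder : ∀ i, (∑ j ∈ Finset.range n', ∑ k ∈ Finset.range (ng i),
          ∑ l ∈ Finset.range (nr j), ∑ m ∈ Finset.range (nq i k),
            ∑ e ∈ Finset.range (nc j l),
            (a * ρ (f i) a') ⊗ₜ[ℂ] ((p i k * r j l) ⊗ₜ[ℂ]
              (ρ (u i k m * c j l e) b' *
                ρ (v i k m * (d j l e * HopfAlgebra.antipode (R := ℂ) (g' j))) b))) =
        ∑ k ∈ Finset.range (ng i), ∑ m ∈ Finset.range (nq i k), ∑ j ∈ Finset.range n',
          ∑ l ∈ Finset.range (nr j), ∑ e ∈ Finset.range (nc j l),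
            (a * ρ (f i) a') ⊗ₜ[ℂ] ((p i k * r j l) ⊗ₜ[ℂ]
              (ρ (u i k m * c j l e) b' *
                ρ (v i k m * (d j l e * HopfAlgebra.antipode (R := ℂ) (g' j))) b)) := by
      intro i
      rw [Finset.sum_comm]
      refine Finset.sum_congr rfl fun k _ => ?_
      rw [Finset.sum_congr rfl fun j _ => Finset.sum_comm, Finset.sum_comm]
    rw [Finset.sum_congr rfl fun i _ => reorder i]
    refine Finset.sum_congr rfl fun i _ => Finset.sum_congr rfl fun k _ =>
      Finset.sum_congr rfl fun m _ => ?_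
    -- fixed i k m : transport over the h'-side
    obtain ⟨Φ, hΦ⟩ : ∃ Φ : H ⊗[ℂ] (H ⊗[ℂ] (H ⊗[ℂ] H)) →ₗ[ℂ] A ⊗[ℂ] (H ⊗[ℂ] A),
        ∀ y1 y2 y3 y4 : H, Φ (y1 ⊗ₜ[ℂ] (y2 ⊗ₜ[ℂ] (y3 ⊗ₜ[ℂ] y4))) =
          (a * ρ (f i) a') ⊗ₜ[ℂ] ((p i k * y1) ⊗ₜ[ℂ]
            (ρ (u i k m * y2) b' *
              ρ (v i k m * (y3 * HopfAlgebra.antipode (R := ℂ) y4)) b)) := by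
      refine ⟨TensorProduct.mk ℂ A (H ⊗[ℂ] A) (a * ρ (f i) a') ∘ₗ
        TensorProduct.map (LinearMap.mulLeft ℂ (p i k))
          (LinearMap.mul' ℂ A ∘ₗ
            TensorProduct.map (ρ.flip b' ∘ₗ LinearMap.mulLeft ℂ (u i k m))
              (ρ.flip b ∘ₗ LinearMap.mulLeft ℂ (v i k m) ∘ₗ LinearMap.mul' ℂ H ∘ₗ
                LinearMap.lTensor H (HopfAlgebra.antipode (R := ℂ)))),
        fun y1 y2 y3 y4 => by
          simp [TensorProduct.map_tmul, LinearMap.mul'_apply]⟩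
    calc
      ∑ j ∈ Finset.range n', ∑ l ∈ Finset.range (nr j), ∑ e ∈ Finset.range (nc j l),
          (a * ρ (f i) a') ⊗ₜ[ℂ] ((p i k * r j l) ⊗ₜ[ℂ]
            (ρ (u i k m * c j l e) b' *
              ρ (v i k m * (d j l e * HopfAlgebra.antipode (R := ℂ) (g' j))) b))
        = Φ (∑ j ∈ Finset.range n', ∑ l ∈ Finset.range (nr j), ∑ e ∈ Finset.range (nc j l),
            r j l ⊗ₜ[ℂ] (c j l e ⊗ₜ[ℂ] (d j l e ⊗ₜ[ℂ] g' j))) := by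
          rw [map_sum]
          refine Finset.sum_congr rfl fun j _ => ?_
          rw [map_sum]
          refine Finset.sum_congr rfl fun l _ => ?_
          rw [map_sum]
          exact Finset.sum_congr rfl fun e _ => (hΦ _ _ _ _).symm
      _ = Φ (∑ j ∈ Finset.range n', ∑ t ∈ Finset.range (nw j), ∑ zz ∈ Finset.range (nz j t),
            f' j ⊗ₜ[ℂ] (w j t ⊗ₜ[ℂ] (y j t zz ⊗ₜ[ℂ] z j t zz))) := by
          rw [coassoc4_rep' hre' hr hc hw hz]
      _ = ∑ j ∈ Finset.range n', ∑ t ∈ Finset.range (nw j), ∑ zz ∈ Finset.range (nz j t),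
            (a * ρ (f i) a') ⊗ₜ[ℂ] ((p i k * f' j) ⊗ₜ[ℂ]
              (ρ (u i k m * w j t) b' *
                ρ (v i k m * (y j t zz * HopfAlgebra.antipode (R := ℂ) (z j t zz))) b)) := by
          rw [map_sum]
          refine Finset.sum_congr rfl fun j _ => ?_
          rw [map_sum]
          refine Finset.sum_congr rfl fun t _ => ?_
          rw [map_sum]
          exact Finset.sum_congr rfl fun zz _ => hΦ _ _ _ _
      _ = ∑ j ∈ Finset.range n', ∑ t ∈ Finset.range (nw j),
            Coalgebra.counit (R := ℂ) (x j t) •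
              ((a * ρ (f i) a') ⊗ₜ[ℂ] ((p i k * f' j) ⊗ₜ[ℂ]
                (ρ (u i k m * w j t) b' * ρ (v i k m) b))) := by
          refine Finset.sum_congr rfl fun j _ => Finset.sum_congr rfl fun t _ => ?_
          obtain ⟨θ, hθ⟩ : ∃ θ : H →ₗ[ℂ] A ⊗[ℂ] (H ⊗[ℂ] A),
              ∀ t' : H, θ t' = (a * ρ (f i) a') ⊗ₜ[ℂ] ((p i k * f' j) ⊗ₜ[ℂ]
                (ρ (u i k m * w j t) b' * ρ (v i k m * t') b)) :=
            ⟨TensorProduct.mk ℂ A (H ⊗[ℂ] A) (a * ρ (f i) a') ∘ₗ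
              TensorProduct.mk ℂ H A (p i k * f' j) ∘ₗ
              LinearMap.mulLeft ℂ (ρ (u i k m * w j t) b') ∘ₗ ρ.flip b ∘ₗ
              LinearMap.mulLeft ℂ (v i k m),
              fun t' => by simp⟩
          calc
            ∑ zz ∈ Finset.range (nz j t),
                (a * ρ (f i) a') ⊗ₜ[ℂ] ((p i k * f' j) ⊗ₜ[ℂ]
                  (ρ (u i k m * w j t) b' *
                    ρ (v i k m * (y j t zz * HopfAlgebra.antipode (R := ℂ) (z j t zz))) b))
              = θ (∑ zz ∈ Finset.range (nz j t),
                  y j t zz * HopfAlgebra.antipode (R := ℂ) (z j t zz)) := by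
                rw [map_sum]
                exact Finset.sum_congr rfl fun zz _ => (hθ _).symm
            _ = Coalgebra.counit (R := ℂ) (x j t) • θ 1 := by
                rw [mul_antipode_rep (hz j t), map_smul]
            _ = Coalgebra.counit (R := ℂ) (x j t) •
                  ((a * ρ (f i) a') ⊗ₜ[ℂ] ((p i k * f' j) ⊗ₜ[ℂ]
                    (ρ (u i k m * w j t) b' * ρ (v i k m) b))) := by
                rw [hθ 1, mul_one]
      _ = ∑ j ∈ Finset.range n',
            (a * ρ (f i) a') ⊗ₜ[ℂ] ((p i k * f' j) ⊗ₜ[ℂ]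
              (ρ (u i k m * g' j) b' * ρ (v i k m) b)) := by
          refine Finset.sum_congr rfl fun j _ => ?_
          obtain ⟨η, hη⟩ : ∃ η : H →ₗ[ℂ] A ⊗[ℂ] (H ⊗[ℂ] A),
              ∀ t' : H, η t' = (a * ρ (f i) a') ⊗ₜ[ℂ] ((p i k * f' j) ⊗ₜ[ℂ]
                (ρ (u i k m * t') b' * ρ (v i k m) b)) :=
            ⟨TensorProduct.mk ℂ A (H ⊗[ℂ] A) (a * ρ (f i) a') ∘ₗ
              TensorProduct.mk ℂ H A (p i k * f' j) ∘ₗ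
              LinearMap.mulRight ℂ (ρ (v i k m) b) ∘ₗ ρ.flip b' ∘ₗ
              LinearMap.mulLeft ℂ (u i k m),
              fun t' => by simp⟩
          calc
            ∑ t ∈ Finset.range (nw j), Coalgebra.counit (R := ℂ) (x j t) •
                ((a * ρ (f i) a') ⊗ₜ[ℂ] ((p i k * f' j) ⊗ₜ[ℂ]
                  (ρ (u i k m * w j t) b' * ρ (v i k m) b)))
              = η (∑ t ∈ Finset.range (nw j),
                  Coalgebra.counit (R := ℂ) (x j t) • w j t) := by
                rw [map_sum]
                exact Finset.sum_congr rfl fun t _ => by rw [map_smul, hη]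
            _ = _ := by rw [counit_rep (hw j), hη]
  rw [hL, hR]

end KIC

/-- For a Hopf algebra `H` over `ℂ` and a left `H`-module algebra `A`, the
Kadison algebra `(A ⊗ Aᵒᵖ) ⋈ H` with multiplication
`(a⊗b⊗h)·(a'⊗b'⊗h') = a(h₍₁₎▷a') ⊗ b'(S(h'₍₂₎)▷b) ⊗ h₍₂₎h'₍₁₎` is isomorphic, as an algebra,
to the Connes–Moscovici algebra `A ⋊ H ⋉ Aᵒᵖ` via `χ(a⊗b⊗h) = a ⊗ h₍₁₎ ⊗ h₍₂₎▷b`, with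
inverse `χ⁻¹(a⊗h⊗b) = a ⊗ S(h₍₂₎)▷b ⊗ h₍₁₎`. -/
theorem kadison_iso_connesMoscovici
    (H A : Type*) [Ring H] [HopfAlgebra ℂ H] [Ring A] [Algebra ℂ A]
    (ρ : H →ₗ[ℂ] A →ₗ[ℂ] A)
    (hρ1 : ρ 1 = LinearMap.id)
    (hρm : ∀ g h : H, ρ (g * h) = ρ g ∘ₗ ρ h)
    (hρa : ∀ (h : H) (a b : A) (ι : Type) (t : Finset ι) (f g : ι → H),
      Coalgebra.comul (R := ℂ) h = ∑ i ∈ t, f i ⊗ₜ[ℂ] g i →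
      ρ h (a * b) = ∑ i ∈ t, ρ (f i) a * ρ (g i) b)
    (hρu : ∀ h : H, ρ h 1 = Coalgebra.counit (R := ℂ) h • (1 : A))
    -- the Connes–Moscovici multiplication on `A ⊗ H ⊗ Aᵒᵖ`
    (mulCM : (A ⊗[ℂ] (H ⊗[ℂ] A)) →ₗ[ℂ] (A ⊗[ℂ] (H ⊗[ℂ] A)) →ₗ[ℂ] (A ⊗[ℂ] (H ⊗[ℂ] A)))
    (hmulCM : ∀ (a a' b b' : A) (h h' : H) (ι : Type) (t : Finset ι) (f g k : ι → H),
      ((LinearMap.lTensor H (Coalgebra.comul (R := ℂ))) ∘ₗ Coalgebra.comul (R := ℂ)) h =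
          ∑ i ∈ t, f i ⊗ₜ[ℂ] (g i ⊗ₜ[ℂ] k i) →
      mulCM (a ⊗ₜ[ℂ] (h ⊗ₜ[ℂ] b)) (a' ⊗ₜ[ℂ] (h' ⊗ₜ[ℂ] b')) =
        ∑ i ∈ t, (a * ρ (f i) a') ⊗ₜ[ℂ] ((g i * h') ⊗ₜ[ℂ] (ρ (k i) b' * b)))
    -- the Kadison multiplication on `A ⊗ Aᵒᵖ ⊗ H`
    (mulK : (A ⊗[ℂ] (A ⊗[ℂ] H)) →ₗ[ℂ] (A ⊗[ℂ] (A ⊗[ℂ] H)) →ₗ[ℂ] (A ⊗[ℂ] (A ⊗[ℂ] H)))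
    (hmulK : ∀ (a a' b b' : A) (h h' : H) (ι κ : Type) (t : Finset ι) (t' : Finset κ)
        (f g : ι → H) (f' g' : κ → H),
      Coalgebra.comul (R := ℂ) h = ∑ i ∈ t, f i ⊗ₜ[ℂ] g i →
      Coalgebra.comul (R := ℂ) h' = ∑ j ∈ t', f' j ⊗ₜ[ℂ] g' j →
      mulK (a ⊗ₜ[ℂ] (b ⊗ₜ[ℂ] h)) (a' ⊗ₜ[ℂ] (b' ⊗ₜ[ℂ] h')) =
        ∑ i ∈ t, ∑ j ∈ t',
          (a * ρ (f i) a') ⊗ₜ[ℂ]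
            ((b' * ρ (HopfAlgebra.antipode (R := ℂ) (g' j)) b) ⊗ₜ[ℂ] (g i * f' j)))
    -- the isomorphism `χ` and its inverse
    (χ : (A ⊗[ℂ] (A ⊗[ℂ] H)) →ₗ[ℂ] (A ⊗[ℂ] (H ⊗[ℂ] A)))
    (hχ : ∀ (a b : A) (h : H) (ι : Type) (t : Finset ι) (f g : ι → H),
      Coalgebra.comul (R := ℂ) h = ∑ i ∈ t, f i ⊗ₜ[ℂ] g i →
      χ (a ⊗ₜ[ℂ] (b ⊗ₜ[ℂ] h)) = ∑ i ∈ t, a ⊗ₜ[ℂ] (f i ⊗ₜ[ℂ] ρ (g i) b))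
    (χinv : (A ⊗[ℂ] (H ⊗[ℂ] A)) →ₗ[ℂ] (A ⊗[ℂ] (A ⊗[ℂ] H)))
    (hχinv : ∀ (a b : A) (h : H) (ι : Type) (t : Finset ι) (f g : ι → H),
      Coalgebra.comul (R := ℂ) h = ∑ i ∈ t, f i ⊗ₜ[ℂ] g i →
      χinv (a ⊗ₜ[ℂ] (h ⊗ₜ[ℂ] b)) =
        ∑ i ∈ t, a ⊗ₜ[ℂ] (ρ (HopfAlgebra.antipode (R := ℂ) (g i)) b ⊗ₜ[ℂ] f i)) :
    Function.Bijective χ ∧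
    (∀ x y : A ⊗[ℂ] (A ⊗[ℂ] H), χ (mulK x y) = mulCM (χ x) (χ y)) ∧
    χ ((1 : A) ⊗ₜ[ℂ] ((1 : A) ⊗ₜ[ℂ] (1 : H))) = (1 : A) ⊗ₜ[ℂ] ((1 : H) ⊗ₜ[ℂ] (1 : A)) ∧
    χinv ∘ₗ χ = LinearMap.id ∧ χ ∘ₗ χinv = LinearMap.id := by
  have comp1 : χinv ∘ₗ χ = LinearMap.id := by
    apply TensorProduct.ext'
    intro xa yz
    induction yz using TensorProduct.induction_on with
    | zero => simp
    | tmul bb hh =>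
      simp only [LinearMap.comp_apply, LinearMap.id_apply]
      exact KIC.key1 ρ hρ1 hρm χ hχ χinv hχinv xa bb hh
    | add yu yv hu hv =>
      simp only [LinearMap.comp_apply, LinearMap.id_apply] at hu hv ⊢
      rw [TensorProduct.tmul_add, map_add, map_add, hu, hv]
  have comp2 : χ ∘ₗ χinv = LinearMap.id := by
    apply TensorProduct.ext'
    intro xa yz
    induction yz using TensorProduct.induction_on with
    | zero => simp
    | tmul hh bb =>
      simp only [LinearMap.comp_apply, LinearMap.id_apply]
      exact KIC.key2 ρ hρ1 hρm χ hχ χinv hχinv xa bb hh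
    | add yu yv hu hv =>
      simp only [LinearMap.comp_apply, LinearMap.id_apply] at hu hv ⊢
      rw [TensorProduct.tmul_add, map_add, map_add, hu, hv]
  refine ⟨?_, ?_, ?_, comp1, comp2⟩
  · have li : Function.LeftInverse χinv χ := fun zx => by
      simpa using LinearMap.congr_fun comp1 zx
    have ri : Function.RightInverse χinv χ := fun zx => by
      simpa using LinearMap.congr_fun comp2 zx
    exact ⟨li.injective, ri.surjective⟩
  · intro xx yy
    induction xx using TensorProduct.induction_on with
    | zero => simp
    | add x1 x2 h1 h2 =>
      simp only [map_add, LinearMap.add_apply, map_add] at h1 h2 ⊢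
      rw [h1, h2]
    | tmul ax wx =>
      induction wx using TensorProduct.induction_on with
      | zero => rw [TensorProduct.tmul_zero]; simp
      | add w1 w2 h1 h2 =>
        rw [TensorProduct.tmul_add]
        simp only [map_add, LinearMap.add_apply] at h1 h2 ⊢
        rw [h1, h2]
      | tmul bx hx =>
        induction yy using TensorProduct.induction_on with
        | zero => simp
        | add y1 y2 h1 h2 =>
          simp only [map_add, LinearMap.add_apply] at h1 h2 ⊢
          rw [h1, h2]
        | tmul ay wy =>
          induction wy using TensorProduct.induction_on with
          | zero => rw [TensorProduct.tmul_zero]; simp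
          | add w1 w2 h1 h2 =>
            rw [TensorProduct.tmul_add]
            simp only [map_add, LinearMap.add_apply] at h1 h2 ⊢
            rw [h1, h2]
          | tmul byy hy =>
            exact KIC.keymul ρ hρm hρa mulCM hmulCM mulK hmulK χ hχ ax bx ay byy hx hy
  · have hone : Coalgebra.comul (R := ℂ) (1 : H) =
        ∑ i ∈ ({0} : Finset ℕ), (fun _ => (1 : H)) i ⊗ₜ[ℂ] (fun _ => (1 : H)) i := by
      simp [Algebra.TensorProduct.one_def]
    rw [hχ 1 1 1 ℕ {0} _ _ hone]
    simp [hρ1]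
end

section
/- Let A_θ be the algebraic quantum torus with q = e^{2πiθ}, R = ℂ[U,U⁻¹], and δ the right character δ(U^nV^m) = q^{nm}U^n. Then the action U^k ◁ U^nV^m := δ(U^k · U^nV^m) = q^{(k+n)m}U^{k+n} makes R a right A_θ-module, and together with the coaction U^n ↦ U^n ⊗ 1 this gives R the structure of a stable anti-Yetter–Drinfeld module over A_θ with group-like element σ = 1; in particular stability holds: for every r ∈ R, r₍₀₎·r₍₋₁₎ = r. -/
/-!
`U` and `V` commute up to the central scalar `q`, so `U^n V^m = q^{nm} V^m U^n` and monomials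
multiply as `(U^n V^m)(U^{n'} V^{m'}) = q^{-n'm} U^{n+n'} V^{m+m'}`. On monomials the module law
`(U^k ◁ x) ◁ y = U^k ◁ xy` then reduces to the exponent identity
`-n'm + (k+n+n')(m+m') = (k+n)m + (k+n+n')m'`, and bilinearity extends it from the spanning
monomials to all of `A_θ` and `R`. Stability is the case `m = 0` of the defining formula:
`1 ◁ U^k = U^k`.
-/

section Group

variable {G : Type*} [Group G] {x y z : G}

theorem mul_eq_inv_mul_of_mul_eq (h : x * y = z * (y * x)) : y * x = z⁻¹ * (x * y) := by
  rw [h, inv_mul_cancel_left]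

theorem mul_zpow_eq_of_mul_eq_central (hz : ∀ g, Commute z g) (h : x * y = z * (y * x)) (m : ℤ) :
    x * y ^ m = z ^ m * (y ^ m * x) := by
  have hconj : x * y * x⁻¹ = z * y := by rw [h, mul_assoc, mul_inv_cancel_right]
  rw [← mul_assoc, ← mul_inv_eq_iff_eq_mul, ← conj_zpow, hconj, (hz y).mul_zpow]

theorem zpow_mul_zpow_eq_of_mul_eq_central (hz : ∀ g, Commute z g) (h : x * y = z * (y * x))
    (n m : ℤ) :
    x ^ n * y ^ m = z ^ (n * m) * (y ^ m * x ^ n) := by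
  have hzm : ∀ g, Commute (z ^ m)⁻¹ g := fun g => ((hz g).zpow_left m).inv_left
  have h' := mul_zpow_eq_of_mul_eq_central hzm
    (mul_eq_inv_mul_of_mul_eq (mul_zpow_eq_of_mul_eq_central hz h m)) n
  rw [mul_eq_inv_mul_of_mul_eq h', inv_zpow, inv_inv, ← zpow_mul, mul_comm]

theorem zpow_mul_zpow_mul_zpow_mul_zpow_of_mul_eq_central (hz : ∀ g, Commute z g)
    (h : x * y = z * (y * x)) (n m n' m' : ℤ) :
    x ^ n * y ^ m * (x ^ n' * y ^ m') = z ^ (-(n' * m)) * (x ^ (n + n') * y ^ (m + m')) := by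
  have hyx : y ^ m * x ^ n' = z ^ (-(n' * m)) * (x ^ n' * y ^ m) := by
    rw [mul_eq_inv_mul_of_mul_eq (zpow_mul_zpow_eq_of_mul_eq_central hz h n' m), zpow_neg]
  calc x ^ n * y ^ m * (x ^ n' * y ^ m') = x ^ n * (y ^ m * x ^ n') * y ^ m' := by
        simp only [mul_assoc]
    _ = z ^ (-(n' * m)) * (x ^ n * x ^ n' * (y ^ m * y ^ m')) := by
        rw [hyx]
        simp only [mul_assoc]
        rw [← ((hz _).zpow_left _).left_comm]
    _ = _ := by rw [← zpow_add, ← zpow_add]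

end Group

section Algebra

variable {K A : Type*} [Field K] [Ring A] [Algebra K A] {c : K} {X Y : Aˣ}

theorem val_zpow_mul_val_zpow_mul_of_mul_eq_smul (hc : c ≠ 0)
    (h : (X : A) * Y = c • ((Y : A) * X)) (n m n' m' : ℤ) :
    (↑(X ^ n) * ↑(Y ^ m) : A) * (↑(X ^ n') * ↑(Y ^ m')) =
      c ^ (-(n' * m)) • (↑(X ^ (n + n')) * ↑(Y ^ (m + m')) : A) := by
  set C : Aˣ := Units.map (algebraMap K A : K →* A) (Units.mk0 c hc)
  have hC : ∀ g, Commute C g := fun g => Units.ext (Algebra.commutes c (g : A))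
  have hval : ∀ k : ℤ, (↑(C ^ k) : A) = algebraMap K A (c ^ k) := fun k => by
    rw [← map_zpow, Units.coe_map, Units.val_zpow_eq_zpow_val, Units.val_mk0]; rfl
  have hXY : X * Y = C * (Y * X) := Units.ext <| by
    rw [Units.val_mul, Units.val_mul, Units.val_mul, ← zpow_one C, hval, zpow_one,
      ← Algebra.smul_def]
    exact h
  simpa only [Units.val_mul, hval, ← Algebra.smul_def] using
    congrArg Units.val (zpow_mul_zpow_mul_zpow_mul_zpow_of_mul_eq_central hC hXY n m n' m')

end Algebra

theorem LinearMap.map_mul_apply_of_span_eq_top {K A M : Type*} [CommSemiring K] [Semiring A]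
    [Algebra K A] [AddCommMonoid M] [Module K M] (act : A →ₗ[K] M →ₗ[K] M) {s : Set A}
    {t : Set M} (hs : Submodule.span K s = ⊤) (ht : Submodule.span K t = ⊤)
    (h : ∀ x ∈ s, ∀ y ∈ s, ∀ r ∈ t, act (x * y) r = act y (act x r)) (x y : A) (r : M) :
    act (x * y) r = act y (act x r) := by
  have hbil :
      (LinearMap.mul K A).compr₂ act = ((LinearMap.llcomp K M M M).compl₁₂ act act).flip :=
    LinearMap.ext_on hs fun x hx => LinearMap.ext_on hs fun y hy =>
      LinearMap.ext_on ht fun r hr => h x hx y hy r hr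
  exact LinearMap.congr_fun (LinearMap.congr_fun₂ hbil x y) r

/-- For the quantum torus `A_θ` with right character `δ(U^nV^m) = q^{nm}U^n`,
the action `U^k ◁ U^nV^m := δ(U^k·U^nV^m) = q^{(k+n)m}U^{k+n}` makes `R = ℂ[U,U⁻¹]` a right
`A_θ`-module, and together with the coaction `r ↦ s(r) ⊗ 1` (group-like `σ = 1`) this is a
stable anti-Yetter–Drinfeld module; in particular stability holds: `r₍₀₎ · r₍₋₁₎ = r`,
i.e. `1 ◁ s(r) = r`. -/
theorem quantum_torus_SAYD_stability
    (A R : Type*) [Ring A] [Algebra ℂ A] [CommRing R] [Algebra ℂ R]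
    (q : ℂ) (θ : ℝ) (hq : q = Complex.exp (2 * Real.pi * θ * Complex.I))
    (U V : Aˣ) (hUV : (U : A) * V = q • ((V : A) * U))
    (emb : R →ₐ[ℂ] A) (u : Rˣ) (hu : emb u = U)
    (hspanA : Submodule.span ℂ {x : A | ∃ n m : ℤ, x = ↑(U ^ n) * ↑(V ^ m)} = ⊤)
    (hspanR : Submodule.span ℂ {r : R | ∃ n : ℤ, r = ↑(u ^ n)} = ⊤)
    (act : A →ₗ[ℂ] R →ₗ[ℂ] R)
    (hact : ∀ n m k : ℤ,
      act (↑(U ^ n) * ↑(V ^ m)) (↑(u ^ k)) = q ^ ((k + n) * m) • (↑(u ^ (k + n)) : R)) :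
    -- `R` is a right `A_θ`-module under `◁`
    (∀ (x y : A) (r : R), act (x * y) r = act y (act x r)) ∧
    (∀ r : R, act 1 r = r) ∧
    -- stability of the anti-Yetter–Drinfeld module `R` (coaction `r ↦ s(r)·σ ⊗ 1`, `σ = 1`)
    (∀ r : R, act (emb r) 1 = r) := by
  have hq0 : q ≠ 0 := hq ▸ Complex.exp_ne_zero _
  have hemb : ∀ k : ℤ, emb ↑(u ^ k) = ↑(U ^ k) := fun k => by
    rw [← (Units.ext hu : Units.map (emb : R →* A) u = U), ← map_zpow]; rfl
  refine ⟨act.map_mul_apply_of_span_eq_top hspanA hspanR ?_, fun r => ?_, fun r => ?_⟩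
  · rintro _ ⟨n, m, rfl⟩ _ ⟨n', m', rfl⟩ _ ⟨k, rfl⟩
    rw [val_zpow_mul_val_zpow_mul_of_mul_eq_smul hq0 hUV, map_smul, LinearMap.smul_apply, hact,
      hact, map_smul, hact, smul_smul, smul_smul, ← zpow_add₀ hq0, ← zpow_add₀ hq0, ← add_assoc]
    congr 2
    ring
  · refine LinearMap.congr_fun (LinearMap.ext_on hspanR ?_ : act 1 = LinearMap.id) r
    rintro _ ⟨k, rfl⟩
    simpa using hact 0 0 k
  · refine LinearMap.congr_fun
      (LinearMap.ext_on hspanR ?_ : act.flip 1 ∘ₗ emb.toLinearMap = LinearMap.id) r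
    rintro _ ⟨k, rfl⟩
    simpa [hemb] using hact k 0 0
end

section
/- Let R be a unital ℂ-algebra, x an invertible element of the center of R, δ : R ⊗ R^op → R the map δ(r⊗r') = rr'. Then R with action r ◁ (r₁⊗r₂) := r₂rr₁ and coaction r ↦ (rx ⊗ x⁻¹) ⊗ 1 is a stable anti-Yetter–Drinfeld module over the ×_R-Hopf algebra R ⊗ R^op; in particular the stability condition r₍₀₎ ◁ r₍₋₁₎ = r holds. -/
open TensorProduct MulOpposite

/-- Let `R` be a unital `ℂ`-algebra and `x` an invertible central element.
Then `R`, with right action `r ◁ (r₁⊗r₂) = r₂rr₁` of `K = R ⊗ Rᵒᵖ` and coaction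
`r ↦ (rx ⊗ x⁻¹) ⊗ 1`, is a stable anti-Yetter–Drinfeld module over the `×_R`-Hopf algebra
`R ⊗ Rᵒᵖ`: it is a right module, the AYD compatibility
`(mk)₍₋₁₎ ⊗ (mk)₍₀₎ = k₍₂₎⁺ m₍₋₁₎ k₍₁₎ ⊗ m₍₀₎ k₍₂₎⁻` holds (for `k = r₁ ⊗ r₂` one has
`k₍₁₎ = r₁⊗1`, `k₍₂₎⁺ = r₂⊗1`, `k₍₂₎⁻ = 1⊗1`), and stability `r₍₀₎ ◁ r₍₋₁₎ = r` holds. -/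
theorem enveloping_SAYD
    (R : Type*) [Ring R] [Algebra ℂ R]
    (x : Rˣ) (hx : ∀ r : R, (x : R) * r = r * x)
    (act : (R ⊗[ℂ] Rᵐᵒᵖ) →ₗ[ℂ] R →ₗ[ℂ] R)
    (hact : ∀ r r₁ r₂ : R, act (r₁ ⊗ₜ[ℂ] op r₂) r = r₂ * r * r₁) :
    -- right module law
    (∀ (k k' : R ⊗[ℂ] Rᵐᵒᵖ) (r : R), act (k * k') r = act k' (act k r)) ∧
    (∀ r : R, act 1 r = r) ∧
    -- the anti-Yetter–Drinfeld condition, with coaction `r ↦ ((r * x) ⊗ op x⁻¹) ⊗ 1`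
    (∀ r r₁ r₂ : R,
      ((act (r₁ ⊗ₜ[ℂ] op r₂) r * (x : R)) ⊗ₜ[ℂ] op ((x⁻¹ : Rˣ) : R) : R ⊗[ℂ] Rᵐᵒᵖ) =
        (r₂ ⊗ₜ[ℂ] op (1 : R)) * (((r * (x : R)) ⊗ₜ[ℂ] op ((x⁻¹ : Rˣ) : R)) *
          (r₁ ⊗ₜ[ℂ] op (1 : R)))) ∧
    -- stability
    (∀ r : R, act ((r * (x : R)) ⊗ₜ[ℂ] op ((x⁻¹ : Rˣ) : R)) 1 = r) := by
  refine ⟨?_, ?_, ?_, ?_⟩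
  · intro k k' r
    induction k using TensorProduct.induction_on with
    | zero => simp
    | tmul a b =>
      induction k' using TensorProduct.induction_on with
      | zero => simp
      | tmul c d =>
        induction b using MulOpposite.rec' with | h b =>
        induction d using MulOpposite.rec' with | h d =>
        rw [Algebra.TensorProduct.tmul_mul_tmul]
        rw [show op b * op d = op (d * b) from rfl]
        rw [hact, hact, hact]
        noncomm_ring
      | add u v hu hv => simp [mul_add, hu, hv]
    | add u v hu hv => simp [add_mul, hu, hv]
  · intro r
    have : (1 : R ⊗[ℂ] Rᵐᵒᵖ) = (1 : R) ⊗ₜ[ℂ] op (1 : R) := rfl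
    rw [this, hact]; simp
  · intro r r₁ r₂
    rw [hact, Algebra.TensorProduct.tmul_mul_tmul, Algebra.TensorProduct.tmul_mul_tmul]
    rw [show op ((x⁻¹ : Rˣ) : R) * op (1 : R) = op ((x⁻¹ : Rˣ) : R) by simp,
        show op (1 : R) * op ((x⁻¹ : Rˣ) : R) = op ((x⁻¹ : Rˣ) : R) by simp]
    congr 1
    rw [show r * (x : R) * r₁ = r * r₁ * (x : R) by rw [mul_assoc, hx r₁, ← mul_assoc],
        ← mul_assoc, ← mul_assoc]
  · intro r
    rw [hact]
    have := hx r
    calc ((x⁻¹ : Rˣ) : R) * 1 * (r * (x : R)) = ((x⁻¹ : Rˣ) : R) * ((x : R) * r) := by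
          rw [mul_one, hx r]
      _ = r := by rw [← mul_assoc]; simp
end
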